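/- arXiv:1102.5060 — 5 statements merged into one kernel-verified Lean document; each statement's English description precedes it below -/
import Mathlib

section
/- Let x_1, …, x_N be vectors that span the Euclidean space ℝ^n, and let y_1, …, y_N be vectors in ℝ^n such that ⟨x_i, y_j⟩ + ⟨x_j, y_i⟩ = 0 for all i, j ∈ {1, …, N}. Then there exists a skew-symmetric linear map Φ : ℝ^n → ℝ^n (i.e. ⟨Φu, v⟩ = −⟨u, Φv⟩ for all u, v ∈ ℝ^n) such that y_i = Φ x_i for all i. -/
open scoped RealInnerProductSpace

/-!
Extend `x` and `y` linearly to `S T : (ι →₀ ℝ) →ₗ[ℝ] E`. The relation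
`⟪S a, T b⟫ + ⟪S b, T a⟫ = 0` is bilinear in `(a, b)`, so it holds for all `a, b` once it holds
on basis vectors. Since `x` spans, `S` is onto; if `S c = 0` then `T c` is orthogonal to the range
of `S`, hence zero. So `T` factors as `Φ ∘ S`, and `Φ` is skew by the extended relation.
-/

theorem LinearMap.exists_comp_eq_of_surjective_of_ker_le {R M M₂ M₃ : Type*} [Ring R]
    [AddCommGroup M] [Module R M] [AddCommGroup M₂] [Module R M₂] [AddCommGroup M₃] [Module R M₃]
    {S : M →ₗ[R] M₂} (T : M →ₗ[R] M₃) (hS : Function.Surjective S) (hker : ker S ≤ ker T) :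
    ∃ Φ : M₂ →ₗ[R] M₃, Φ ∘ₗ S = T :=
  ⟨(ker S).liftQ T hker ∘ₗ (S.quotKerEquivOfSurjective hS).symm.toLinearMap, by
    ext c
    have hc : (S.quotKerEquivOfSurjective hS).symm (S c) = Submodule.Quotient.mk c := by
      rw [LinearEquiv.symm_apply_eq, quotKerEquivOfSurjective_apply_mk]
    simp [hc]⟩

section Skew

open Finsupp

variable {ι E : Type*} [NormedAddCommGroup E] [InnerProductSpace ℝ E] {x y : ι → E}

theorem inner_linearCombination_add_inner_linearCombination_eq_zero
    (h : ∀ i j, ⟪x i, y j⟫ + ⟪x j, y i⟫ = 0) (a b : ι →₀ ℝ) :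
    ⟪linearCombination ℝ x a, linearCombination ℝ y b⟫ +
      ⟪linearCombination ℝ x b, linearCombination ℝ y a⟫ = 0 := by
  induction a using Finsupp.induction_linear with
  | zero => simp
  | add a a' ha ha' => simp only [map_add, inner_add_left, inner_add_right]; linarith
  | single i s =>
    induction b using Finsupp.induction_linear with
    | zero => simp
    | add b b' hb hb' => simp only [map_add, inner_add_left, inner_add_right]; linarith
    | single j t =>
      simp only [linearCombination_single, real_inner_smul_left, real_inner_smul_right]
      linear_combination s * t * h i j

theorem ker_linearCombination_le_ker_linearCombination_of_span_eq_top
    (hspan : Submodule.span ℝ (Set.range x) = ⊤) (h : ∀ i j, ⟪x i, y j⟫ + ⟪x j, y i⟫ = 0) :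
    LinearMap.ker (linearCombination ℝ x) ≤ LinearMap.ker (linearCombination ℝ y) := by
  intro c hc
  rw [LinearMap.mem_ker] at hc ⊢
  obtain ⟨b, hb⟩ : ∃ b, linearCombination ℝ x b = linearCombination ℝ y c := by
    rw [← LinearMap.mem_range, range_linearCombination, hspan]
    trivial
  have := inner_linearCombination_add_inner_linearCombination_eq_zero h c b
  rwa [hc, inner_zero_left, zero_add, hb, inner_self_eq_zero] at this

theorem exists_skew_linearMap_apply_eq_of_span_eq_top
    (hspan : Submodule.span ℝ (Set.range x) = ⊤) (h : ∀ i j, ⟪x i, y j⟫ + ⟪x j, y i⟫ = 0) :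
    ∃ Φ : E →ₗ[ℝ] E, (∀ u v, ⟪Φ u, v⟫ = -⟪u, Φ v⟫) ∧ ∀ i, y i = Φ (x i) := by
  have hS : Function.Surjective (linearCombination ℝ x) := by
    rw [← LinearMap.range_eq_top, range_linearCombination, hspan]
  obtain ⟨Φ, hΦ⟩ := LinearMap.exists_comp_eq_of_surjective_of_ker_le _ hS
    (ker_linearCombination_le_ker_linearCombination_of_span_eq_top hspan h)
  have hΦ_apply (a : ι →₀ ℝ) : Φ (linearCombination ℝ x a) = linearCombination ℝ y a :=
    LinearMap.congr_fun hΦ a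
  refine ⟨Φ, fun u v ↦ ?_, fun i ↦ ?_⟩
  · obtain ⟨a, rfl⟩ := hS u
    obtain ⟨b, rfl⟩ := hS v
    rw [hΦ_apply, hΦ_apply, real_inner_comm, eq_neg_iff_add_eq_zero, add_comm]
    exact inner_linearCombination_add_inner_linearCombination_eq_zero h a b
  · simpa using (hΦ_apply (single i 1)).symm

end Skew

theorem statement0 {n N : ℕ} (x y : Fin N → EuclideanSpace ℝ (Fin n))
    (hspan : Submodule.span ℝ (Set.range x) = ⊤)
    (h : ∀ i j, ⟪x i, y j⟫ + ⟪x j, y i⟫ = 0) :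
    ∃ Φ : EuclideanSpace ℝ (Fin n) →ₗ[ℝ] EuclideanSpace ℝ (Fin n),
      (∀ u v, ⟪Φ u, v⟫ = -⟪u, Φ v⟫) ∧ ∀ i, y i = Φ (x i) :=
  exists_skew_linearMap_apply_eq_of_span_eq_top hspan h
end

section
/- Let N ≥ 2, let x : Fin N → ℝ^n be an injective family of unit vectors, and let m = max_{i ≠ j} ⟨x_i, x_j⟩. Suppose the code is infinitesimally jammed: every family y : Fin N → ℝ^n satisfying ⟨x_i, y_i⟩ = 0 for all i and ⟨x_i, y_j⟩ + ⟨x_j, y_i⟩ ≤ 0 for all i ≠ j with ⟨x_i, x_j⟩ = m admits a skew-symmetric linear map Φ : ℝ^n → ℝ^n (⟨Φu, v⟩ = −⟨u, Φv⟩ for all u, v) with y_i = Φ x_i for all i. Then the code is jammed: for every continuous map γ : [0,1] → (Fin N → ℝ^n) with γ(0) = x, with |γ(t)_i| = 1 for all t and i, and with ⟨γ(t)_i, γ(t)_j⟩ ≤ m for all t and all i ≠ j, one has ⟨γ(t)_i, γ(t)_j⟩ = ⟨x_i, x_j⟩ for all t, i, j. -/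
open scoped RealInnerProductSpace

/-!
Suppose the Gram matrix of some code close to `x` differed from that of `x`. Rotating such a code
by the orthogonal map that best aligns it with `x` (orthogonal Procrustes) keeps it a code, brings
it at least as close to `x`, and by the first-order optimality condition makes its displacement
`d` from `x` orthogonal to every infinitesimal rotation `Ψ x`. Normalizing these displacements and
passing to a limit produces a unit vector `w` satisfying the linearized constraints, so
infinitesimal jamming gives `w = Φ x` with `Φ` skew; orthogonality to `Φ x` then forces
`∑ ‖w i‖² = 0`. Hence the Gram matrix is locally constant along the path wherever it equals that
of `x`, and connectedness of `[0, 1]` finishes the argument.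
-/

open Filter Topology NormedSpace
open Matrix (gram star_dotProduct_gram_mulVec)

variable {ι E : Type*} [NormedAddCommGroup E] [InnerProductSpace ℝ E]

def sphericalCodes (m : ℝ) : Set (ι → E) :=
  {q | (∀ i, ‖q i‖ = 1) ∧ ∀ i j, i ≠ j → ⟪q i, q j⟫ ≤ m}

def IsInfinitesimallyJammed (x : ι → E) (m : ℝ) : Prop :=
  ∀ y : ι → E, (∀ i, ⟪x i, y i⟫ = 0) →
    (∀ i j, i ≠ j → ⟪x i, x j⟫ = m → ⟪x i, y j⟫ + ⟪x j, y i⟫ ≤ 0) →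
    ∃ Φ : E →ₗ[ℝ] E, (∀ u v, ⟪Φ u, v⟫ = -⟪u, Φ v⟫) ∧ ∀ i, y i = Φ (x i)

theorem gram_comp_eq {f : E → E} (hf : ∀ u v, ⟪f u, f v⟫ = ⟪u, v⟫) (q : ι → E) :
    gram ℝ (f ∘ q) = gram ℝ q := by
  ext i j
  exact hf (q i) (q j)

theorem continuous_gram : Continuous (gram ℝ : (ι → E) → Matrix ι ι ℝ) :=
  continuous_pi fun i => continuous_pi fun j => (continuous_apply i).inner (continuous_apply j)

theorem mem_sphericalCodes_of_gram_eq {m : ℝ} {q q' : ι → E} (h : gram ℝ q = gram ℝ q')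
    (hq' : q' ∈ sphericalCodes m) : q ∈ sphericalCodes m := by
  have hg : ∀ i j, ⟪q i, q j⟫ = ⟪q' i, q' j⟫ := fun i j => congrFun (congrFun h i) j
  refine ⟨fun i => ?_, fun i j hij => hg i j ▸ hq'.2 i j hij⟩
  have hii := hg i i
  rw [real_inner_self_eq_norm_sq, real_inner_self_eq_norm_sq, hq'.1 i, one_pow] at hii
  exact (pow_eq_one_iff_of_nonneg (norm_nonneg _) two_ne_zero).mp hii

theorem exists_linearIsometry_apply_eq_of_gram_eq [Fintype ι] [FiniteDimensional ℝ E]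
    {x y : ι → E} (h : gram ℝ y = gram ℝ x) : ∃ V : E →ₗᵢ[ℝ] E, ∀ i, V (y i) = x i := by
  classical
  let Y := Fintype.linearCombination ℝ y
  let X := Fintype.linearCombination ℝ x
  have hnorm : ∀ c, ‖Y c‖ = ‖X c‖ := by
    intro c
    have hc := star_dotProduct_gram_mulVec (𝕜 := ℝ) y c c
    rw [h, star_dotProduct_gram_mulVec, real_inner_self_eq_norm_sq,
      real_inner_self_eq_norm_sq] at hc
    simp only [Y, X, Fintype.linearCombination_apply]
    exact (sq_eq_sq₀ (norm_nonneg _) (norm_nonneg _)).mp hc.symm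
  have hker : LinearMap.ker Y ≤ LinearMap.ker X := fun c hc => by
    rw [LinearMap.mem_ker, ← norm_eq_zero, ← hnorm, norm_eq_zero]
    exact hc
  -- `X ∘ Y⁻¹` is well defined on the range of `Y` and isometric there
  let L : LinearMap.range Y →ₗ[ℝ] E :=
    ((LinearMap.ker Y).liftQ X hker).comp Y.quotKerEquivRange.symm.toLinearMap
  have hL : ∀ c, L ⟨Y c, LinearMap.mem_range_self Y c⟩ = X c := fun c => by
    simp [L, LinearMap.quotKerEquivRange_symm_apply_image]
  have hL_norm : ∀ s, ‖L s‖ = ‖s‖ := by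
    rintro ⟨_, c, rfl⟩
    rw [hL, ← hnorm]
    rfl
  refine ⟨LinearIsometry.extend ⟨L, hL_norm⟩, fun i => ?_⟩
  have hy : Y (Pi.single i 1) = y i := by simp [Y]
  have hx : X (Pi.single i 1) = x i := by simp [X]
  rw [← hx, ← hL, ← hy]
  exact LinearIsometry.extend_apply _ ⟨_, LinearMap.mem_range_self Y _⟩

theorem inner_apply_self_eq_zero_of_mem_skewAdjoint [CompleteSpace E] {Ψ : E →L[ℝ] E}
    (hΨ : Ψ ∈ skewAdjoint (E →L[ℝ] E)) (v : E) : ⟪Ψ v, v⟫ = 0 := by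
  have h := Ψ.adjoint_inner_right v v
  rw [← ContinuousLinearMap.star_eq_adjoint, skewAdjoint.mem_iff.mp hΨ,
    _root_.neg_apply, inner_neg_right, real_inner_comm] at h
  linarith

theorem LinearMap.toContinuousLinearMap_mem_skewAdjoint [FiniteDimensional ℝ E]
    {Φ : E →ₗ[ℝ] E} (hΦ : ∀ u v, ⟪Φ u, v⟫ = -⟪u, Φ v⟫) :
    LinearMap.toContinuousLinearMap Φ ∈ skewAdjoint (E →L[ℝ] E) := by
  rw [skewAdjoint.mem_iff, ContinuousLinearMap.star_eq_adjoint, eq_comm,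
    ContinuousLinearMap.eq_adjoint_iff]
  intro u v
  simp [hΦ]

section Procrustes

variable [FiniteDimensional ℝ E]

theorem isCompact_unitary_continuousLinearMap :
    IsCompact (unitary (E →L[ℝ] E) : Set (E →L[ℝ] E)) := by
  refine Metric.isCompact_of_isClosed_isBounded isClosed_unitary
    ((Metric.isBounded_closedBall (x := 0) (r := 1)).subset fun U hU => ?_)
  rw [Metric.mem_closedBall, dist_zero_right]
  exact U.opNorm_le_bound zero_le_one fun v => by
    rw [ContinuousLinearMap.norm_map_of_mem_unitary hU, one_mul]

variable [Fintype ι] (x q : ι → E) {U₀ : E →L[ℝ] E}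

theorem sum_norm_sub_sq_le_of_isMaxOn (hU₀ : U₀ ∈ unitary (E →L[ℝ] E))
    (hmax : IsMaxOn (fun U : E →L[ℝ] E => ∑ i, ⟪U (q i), x i⟫) (unitary (E →L[ℝ] E)) U₀) :
    ∑ i, ‖U₀ (q i) - x i‖ ^ 2 ≤ ∑ i, ‖q i - x i‖ ^ 2 := by
  have h1 : ∑ i, ⟪q i, x i⟫ ≤ ∑ i, ⟪U₀ (q i), x i⟫ := hmax (one_mem _)
  simp only [norm_sub_sq_real, ContinuousLinearMap.norm_map_of_mem_unitary hU₀,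
    Finset.sum_add_distrib, Finset.sum_sub_distrib, ← Finset.mul_sum]
  linarith

theorem sum_inner_skewAdjoint_eq_zero_of_isMaxOn (hU₀ : U₀ ∈ unitary (E →L[ℝ] E))
    (hmax : IsMaxOn (fun U : E →L[ℝ] E => ∑ i, ⟪U (q i), x i⟫) (unitary (E →L[ℝ] E)) U₀)
    {Ψ : E →L[ℝ] E} (hΨ : Ψ ∈ skewAdjoint (E →L[ℝ] E)) :
    ∑ i, ⟪Ψ (U₀ (q i)), x i⟫ = 0 := by
  let _ : NormedAlgebra ℚ (E →L[ℝ] E) := .restrictScalars ℚ ℝ _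
  -- perturb the maximizer along the one-parameter group `s ↦ exp (s Ψ)` of rotations
  let f : ℝ → ℝ := fun s => ∑ i, ⟪exp (s • Ψ) (U₀ (q i)), x i⟫
  have hmax_f : IsLocalMax f 0 := Eventually.of_forall fun s => by
    have hs := hmax (mul_mem (exp_mem_unitary_of_mem_skewAdjoint (skewAdjoint.smul_mem s hΨ)) hU₀)
    simpa [f] using hs
  have hderiv : HasDerivAt f (∑ i, ⟪Ψ (U₀ (q i)), x i⟫) 0 := by
    refine HasDerivAt.fun_sum fun i _ => ?_
    have hexp : HasDerivAt (fun s : ℝ => exp (s • Ψ)) Ψ 0 := by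
      simpa using hasDerivAt_exp_smul_const (𝕂 := ℝ) Ψ 0
    simpa using
      (hexp.clm_apply (hasDerivAt_const 0 (U₀ (q i)))).inner ℝ (hasDerivAt_const 0 (x i))
  exact hmax_f.hasDerivAt_eq_zero hderiv

end Procrustes

section Limits

variable [Fintype ι] {α : Type*} {l : Filter α}

theorem tendsto_of_sum_norm_sub_sq_le {F : Type*} [SeminormedAddCommGroup F] {q q' : α → ι → F}
    {x : ι → F} (hq : Tendsto q l (𝓝 x))
    (h : ∀ k, ∑ i, ‖q' k i - x i‖ ^ 2 ≤ ∑ i, ‖q k i - x i‖ ^ 2) : Tendsto q' l (𝓝 x) := by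
  have hdist : Tendsto (fun k => √(∑ i, ‖q k i - x i‖ ^ 2)) l (𝓝 0) := by
    have hcont : Continuous fun v : ι → F => √(∑ i, ‖v i - x i‖ ^ 2) := by fun_prop
    simpa [Function.comp_def] using hcont.tendsto x |>.comp hq
  refine tendsto_pi_nhds.mpr fun i => tendsto_iff_norm_sub_tendsto_zero.mpr ?_
  refine squeeze_zero (fun _ => norm_nonneg _) (fun k => Real.le_sqrt_of_sq_le ?_) hdist
  exact (Finset.single_le_sum (fun j _ => sq_nonneg ‖q' k j - x j‖) (Finset.mem_univ i)).trans
    (h k)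

theorem tendsto_inner_div_norm_of_tendsto_zero {d : α → ι → E} (hd : Tendsto d l (𝓝 0))
    (i j : ι) : Tendsto (fun k => ⟪d k i, d k j⟫ / ‖d k‖) l (𝓝 0) := by
  refine squeeze_zero_norm (fun k => ?_) (tendsto_norm_zero.comp hd)
  rw [Real.norm_eq_abs, abs_div, abs_norm]
  refine div_le_of_le_mul₀ (norm_nonneg _) (norm_nonneg _) ?_
  calc |⟪d k i, d k j⟫| ≤ ‖d k i‖ * ‖d k j‖ := abs_real_inner_le_norm _ _
    _ ≤ ‖d k‖ * ‖d k‖ :=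
      mul_le_mul (norm_le_pi_norm _ i) (norm_le_pi_norm _ j) (norm_nonneg _) (norm_nonneg _)

theorem tendsto_inner_add_sub_inner_div_norm {d : α → ι → E} {w : ι → E}
    (hd : Tendsto d l (𝓝 0)) (hw : Tendsto (fun k => ‖d k‖⁻¹ • d k) l (𝓝 w)) (x : ι → E)
    (i j : ι) :
    Tendsto (fun k => (⟪x i + d k i, x j + d k j⟫ - ⟪x i, x j⟫) / ‖d k‖) l
      (𝓝 (⟪x i, w j⟫ + ⟪x j, w i⟫)) := by
  have hcoord (i' : ι) : Tendsto (fun k => ‖d k‖⁻¹ • d k i') l (𝓝 (w i')) :=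
    ((continuous_apply i').tendsto w).comp hw
  have hlim := (((tendsto_const_nhds (x := x i)).inner (hcoord j)).add
    ((tendsto_const_nhds (x := x j)).inner (hcoord i))).add
      (tendsto_inner_div_norm_of_tendsto_zero hd i j)
  rw [add_zero] at hlim
  refine hlim.congr fun k => ?_
  simp only [inner_add_left, inner_add_right, real_inner_smul_right,
    real_inner_comm (d k i) (x j)]
  ring

end Limits

theorem exists_subseq_tendsto_inv_norm_smul {F : Type*} [NormedAddCommGroup F] [NormedSpace ℝ F]
    [FiniteDimensional ℝ F] {d : ℕ → F} (hd : ∀ k, d k ≠ 0) :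
    ∃ w ≠ 0, ∃ φ : ℕ → ℕ, StrictMono φ ∧
      Tendsto (fun k => ‖d (φ k)‖⁻¹ • d (φ k)) atTop (𝓝 w) := by
  obtain ⟨w, hw, φ, hφ, hlim⟩ := (isCompact_sphere (0 : F) 1).tendsto_subseq
    (x := fun k => ‖d k‖⁻¹ • d k) fun k => by
      rw [mem_sphere_zero_iff_norm, norm_smul, norm_inv, norm_norm,
        inv_mul_cancel₀ (norm_ne_zero_iff.mpr (hd k))]
  exact ⟨w, ne_zero_of_mem_unit_sphere ⟨w, hw⟩, φ, hφ, hlim⟩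

namespace IsInfinitesimallyJammed

variable [Fintype ι] [FiniteDimensional ℝ E] {x : ι → E} {m : ℝ}

theorem eq_zero (hjam : IsInfinitesimallyJammed x m) {w : ι → E}
    (hflex : ∀ i, ⟪x i, w i⟫ = 0)
    (hcontact : ∀ i j, i ≠ j → ⟪x i, x j⟫ = m → ⟪x i, w j⟫ + ⟪x j, w i⟫ ≤ 0)
    (horth : ∀ Ψ ∈ skewAdjoint (E →L[ℝ] E), ∑ i, ⟪Ψ (w i), x i⟫ = 0) : w = 0 := by
  obtain ⟨Φ, hΦ, hw⟩ := hjam w hflex hcontact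
  have hsum : ∑ i, ⟪w i, w i⟫ = 0 := by
    have h := horth _ (LinearMap.toContinuousLinearMap_mem_skewAdjoint hΦ)
    simpa only [LinearMap.coe_toContinuousLinearMap', hΦ, ← hw, Finset.sum_neg_distrib,
      neg_eq_zero] using h
  funext i
  exact inner_self_eq_zero.mp <|
    (Finset.sum_eq_zero_iff_of_nonneg fun j _ => real_inner_self_nonneg).mp hsum i
      (Finset.mem_univ i)

theorem eventually_eq_of_sum_inner_skewAdjoint_eq_zero (hunit : ∀ i, ‖x i‖ = 1)
    (hjam : IsInfinitesimallyJammed x m) :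
    ∀ᶠ q in 𝓝[sphericalCodes m] x,
      (∀ Ψ ∈ skewAdjoint (E →L[ℝ] E), ∑ i, ⟪Ψ (q i), x i⟫ = 0) → q = x := by
  by_contra hcon
  rw [not_eventually, frequently_nhdsWithin_iff, frequently_iff_seq_forall] at hcon
  obtain ⟨q, hqx, hq⟩ := hcon
  simp only [Classical.not_imp] at hq
  set d : ℕ → ι → E := fun k => q k - x
  have hxd (k : ℕ) : x + d k = q k := add_sub_cancel x (q k)
  obtain ⟨w, hw, φ, hφ, hlim⟩ :=
    exists_subseq_tendsto_inv_norm_smul fun k => sub_ne_zero.mpr (hq k).1.2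
  have hd : Tendsto (fun k => d (φ k)) atTop (𝓝 0) := by
    simpa [d, Function.comp_def] using (hqx.sub_const x).comp hφ.tendsto_atTop
  refine hw (hjam.eq_zero (fun i => ?_) (fun i j hij hxij => ?_) fun Ψ hΨ => ?_)
  · have hzero (k : ℕ) :
        (⟪x i + d (φ k) i, x i + d (φ k) i⟫ - ⟪x i, x i⟫) / ‖d (φ k)‖ = 0 := by
      rw [← Pi.add_apply x, hxd, real_inner_self_eq_norm_sq, real_inner_self_eq_norm_sq,
        (hq _).2.1 i, hunit i, sub_self, zero_div]
    have h := tendsto_nhds_unique (tendsto_inner_add_sub_inner_div_norm hd hlim x i i)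
      (by simpa only [hzero] using tendsto_const_nhds)
    linarith
  · refine le_of_tendsto' (tendsto_inner_add_sub_inner_div_norm hd hlim x i j) fun k =>
      div_nonpos_of_nonpos_of_nonneg ?_ (norm_nonneg _)
    rw [← Pi.add_apply x, ← Pi.add_apply x, hxd, hxij, sub_nonpos]
    exact (hq _).2.2 i j hij
  · have hcont : Continuous fun v : ι → E => ∑ i, ⟪Ψ (v i), x i⟫ := by fun_prop
    refine (isClosed_eq hcont continuous_const).mem_of_tendsto hlim
      (Eventually.of_forall fun k => ?_)
    simp only [Set.mem_ofPred_eq, Pi.smul_apply, map_smul, real_inner_smul_left, ← Finset.mul_sum,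
      Pi.sub_apply, map_sub, inner_sub_left, inner_apply_self_eq_zero_of_mem_skewAdjoint hΨ,
      sub_zero, (hq _).1.1 Ψ hΨ, mul_zero]

theorem eventually_gram_eq (hunit : ∀ i, ‖x i‖ = 1) (hjam : IsInfinitesimallyJammed x m) :
    ∀ᶠ q in 𝓝[sphericalCodes m] x, gram ℝ q = gram ℝ x := by
  by_contra hcon
  rw [not_eventually, frequently_nhdsWithin_iff, frequently_iff_seq_forall] at hcon
  obtain ⟨q, hqx, hq⟩ := hcon
  -- rotate each `q k` into the position that best aligns it with `x`
  choose U hU hmax using fun k => isCompact_unitary_continuousLinearMap.exists_isMaxOn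
    ⟨1, one_mem _⟩ (f := fun U : E →L[ℝ] E => ∑ i, ⟪U (q k i), x i⟫) (by fun_prop)
  let q' : ℕ → ι → E := fun k => U k ∘ q k
  have hgram (k : ℕ) : gram ℝ (q' k) = gram ℝ (q k) :=
    gram_comp_eq (ContinuousLinearMap.inner_map_map_of_mem_unitary (hU k)) (q k)
  have hq'x : Tendsto q' atTop (𝓝[sphericalCodes m] x) :=
    tendsto_nhdsWithin_iff.mpr
      ⟨tendsto_of_sum_norm_sub_sq_le hqx fun k =>
          sum_norm_sub_sq_le_of_isMaxOn x _ (hU k) (hmax k),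
        .of_forall fun k => mem_sphericalCodes_of_gram_eq (hgram k) (hq k).2⟩
  obtain ⟨k, hk⟩ :=
    (hq'x.eventually (hjam.eventually_eq_of_sum_inner_skewAdjoint_eq_zero hunit)).exists
  refine (hq k).1 ?_
  rw [← hgram k, hk fun Ψ hΨ => sum_inner_skewAdjoint_eq_zero_of_isMaxOn x _ (hU k) (hmax k) hΨ]

end IsInfinitesimallyJammed

theorem eventually_gram_eq_of_gram_eq [Fintype ι] [FiniteDimensional ℝ E] {m : ℝ} {x y : ι → E}
    (hxy : gram ℝ y = gram ℝ x) (hx : ∀ᶠ q in 𝓝[sphericalCodes m] x, gram ℝ q = gram ℝ x) :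
    ∀ᶠ q in 𝓝[sphericalCodes m] y, gram ℝ q = gram ℝ x := by
  obtain ⟨V, hV⟩ := exists_linearIsometry_apply_eq_of_gram_eq hxy
  have hVy : V ∘ y = x := funext hV
  have hVcont : Continuous fun q : ι → E => V ∘ q :=
    continuous_pi fun i => V.continuous.comp (continuous_apply i)
  have hVtendsto : Tendsto (fun q : ι → E => V ∘ q) (𝓝[sphericalCodes m] y)
      (𝓝[sphericalCodes m] x) :=
    hVy ▸ hVcont.continuousWithinAt.tendsto_nhdsWithin fun q hq =>
      mem_sphericalCodes_of_gram_eq (gram_comp_eq V.inner_map_map q) hq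
  filter_upwards [hVtendsto.eventually hx] with q hq
  rwa [gram_comp_eq V.inner_map_map] at hq

theorem statement1 {n N : ℕ} (x : Fin N → EuclideanSpace ℝ (Fin n))
    (hunit : ∀ i, ‖x i‖ = 1)
    (m : ℝ)
    (hjam : ∀ y : Fin N → EuclideanSpace ℝ (Fin n),
      (∀ i, ⟪x i, y i⟫ = 0) →
      (∀ i j, i ≠ j → ⟪x i, x j⟫ = m → ⟪x i, y j⟫ + ⟪x j, y i⟫ ≤ 0) →
      ∃ Φ : EuclideanSpace ℝ (Fin n) →ₗ[ℝ] EuclideanSpace ℝ (Fin n),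
        (∀ u v, ⟪Φ u, v⟫ = -⟪u, Φ v⟫) ∧ ∀ i, y i = Φ (x i)) :
    ∀ γ : Set.Icc (0 : ℝ) 1 → Fin N → EuclideanSpace ℝ (Fin n),
      Continuous γ →
      γ ⟨0, by norm_num⟩ = x →
      (∀ t i, ‖γ t i‖ = 1) →
      (∀ t i j, i ≠ j → ⟪γ t i, γ t j⟫ ≤ m) →
      ∀ t i j, ⟪γ t i, γ t j⟫ = ⟪x i, x j⟫ := by
  intro γ hγ hγ0 hγunit hγle
  have hcode (t) : γ t ∈ sphericalCodes m := ⟨hγunit t, hγle t⟩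
  let T := {t | gram ℝ (γ t) = gram ℝ x}
  have hT_closed : IsClosed T := isClosed_eq (continuous_gram.comp hγ) continuous_const
  have hT_open : IsOpen T := isOpen_iff_mem_nhds.mpr fun t ht =>
    (tendsto_nhdsWithin_iff.mpr ⟨hγ.tendsto t, .of_forall hcode⟩).eventually
      (eventually_gram_eq_of_gram_eq ht (IsInfinitesimallyJammed.eventually_gram_eq hunit hjam))
  have hT : T = Set.univ :=
    IsClopen.eq_univ ⟨hT_closed, hT_open⟩ ⟨⟨0, by norm_num⟩, congrArg (gram ℝ) hγ0⟩
  intro t i j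
  exact congrFun (congrFun (hT ▸ Set.mem_univ t : t ∈ T) i) j
end

section
/- For every n ≥ 4, the D_n root system X = {±e_i ± e_j : 1 ≤ i < j ≤ n} ⊂ ℝ^n is infinitesimally jammed: every map y : X → ℝ^n satisfying ⟨x, y(x)⟩ = 0 for all x ∈ X and ⟨x, y(x')⟩ + ⟨x', y(x)⟩ ≤ 0 for all distinct x, x' ∈ X with ⟨x, x'⟩ = 1 admits a skew-symmetric linear map Φ : ℝ^n → ℝ^n (⟨Φu, v⟩ = −⟨u, Φv⟩ for all u, v) with y(x) = Φ x for all x ∈ X. -/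
open scoped RealInnerProductSpace

/-- The `Dₙ` root system: all vectors `±eᵢ ± eⱼ` with `i < j`. -/
def DRootSystem (n : ℕ) : Set (EuclideanSpace ℝ (Fin n)) :=
  { v | ∃ i j : Fin n, i < j ∧ ∃ s t : ℝ, (s = 1 ∨ s = -1) ∧ (t = 1 ∨ t = -1) ∧
      v = s • EuclideanSpace.single i (1 : ℝ) + t • EuclideanSpace.single j (1 : ℝ) }

/-!
Each contact constraint lives on a hexagon: if `⟪a, b⟫ = 1` then `a, b, b - a, -a, -b, a - b` are
roots, consecutive ones touch, and every vertex is the sum of its two neighbours. Hence the six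
constraints around the hexagon add up to a sum of terms `⟪x, y x⟫ = 0`, and all of them hold with
equality. The resulting constraints are linear and satisfied by every skew map. Subtracting the
skew map `Φ` with `Φᵢⱼ = y(eᵢ + eⱼ)ᵢ` leaves a solution whose value at `eᵢ + eⱼ` vanishes in the
coordinates `i` and `j`, and the equalities then force it to vanish at the roots `eᵢ + eⱼ`, then at
`eᵢ - eⱼ` (this step needs four distinct indices), then at `-eᵢ - eⱼ`.
-/

open scoped Matrix

theorem inner_add_inner_eq_zero_of_hexagon {E : Type*} [NormedAddCommGroup E]
    [InnerProductSpace ℝ E] {X : Set E} {y : E → E} (hneg : ∀ x ∈ X, -x ∈ X)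
    (hSelf : ∀ x ∈ X, ⟪x, y x⟫ = 0)
    (hEdge : ∀ x ∈ X, ∀ x' ∈ X, x ≠ x' → ⟪x, x'⟫ = 1 → ⟪x, y x'⟫ + ⟪x', y x⟫ ≤ 0)
    {a b : E} (ha : a ∈ X) (hb : b ∈ X) (hba : b - a ∈ X)
    (haa : ⟪a, a⟫ = 2) (hbb : ⟪b, b⟫ = 2) (hab : ⟪a, b⟫ = 1) :
    ⟪a, y b⟫ + ⟪b, y a⟫ = 0 := by
  have edge : ∀ u ∈ X, ∀ v ∈ X, ⟪u, u⟫ = 2 → ⟪u, v⟫ = 1 → ⟪u, y v⟫ + ⟪v, y u⟫ ≤ 0 :=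
    fun u hu v hv huu huv => hEdge u hu v hv (by rintro rfl; linarith) huv
  have hab' : a - b ∈ X := by simpa using hneg _ hba
  have hna := hneg a ha
  have hnb := hneg b hb
  have hba_inner := real_inner_comm a b
  have h₁ := edge a ha b hb haa hab
  have h₂ := edge b hb (b - a) hba hbb (by rw [inner_sub_right]; linarith)
  have h₃ := edge (b - a) hba (-a) hna
    (by simp only [inner_sub_left, inner_sub_right]; linarith)
    (by simp only [inner_sub_left, inner_neg_right]; linarith)
  have h₄ := edge (-a) hna (-b) hnb (by rwa [inner_neg_neg]) (by rwa [inner_neg_neg])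
  have h₅ := edge (-b) hnb (a - b) hab' (by rwa [inner_neg_neg])
    (by simp only [inner_neg_left, inner_sub_right]; linarith)
  have h₆ := edge (a - b) hab' a ha
    (by simp only [inner_sub_left, inner_sub_right]; linarith)
    (by simp only [inner_sub_left]; linarith)
  have s₁ := hSelf a ha
  have s₂ := hSelf b hb
  have s₃ := hSelf _ hba
  have s₄ := hSelf _ hna
  have s₅ := hSelf _ hnb
  have s₆ := hSelf _ hab'
  simp only [inner_sub_left, inner_neg_left] at h₂ h₃ h₄ h₅ h₆ s₃ s₄ s₅ s₆
  linarith

theorem exists_pair_ne_of_four_le_card {α : Type*} [Fintype α] [DecidableEq α]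
    (h : 4 ≤ Fintype.card α) (i j : α) : ∃ k l : α, i ≠ k ∧ j ≠ k ∧ i ≠ l ∧ j ≠ l ∧ k ≠ l := by
  have hcard : 1 < (Finset.univ \ {i, j} : Finset α).card := by
    rw [Finset.card_sdiff_of_subset (Finset.subset_univ _), Finset.card_univ]
    have := Finset.card_le_two (a := i) (b := j)
    omega
  obtain ⟨k, hk, l, hl, hkl⟩ := Finset.one_lt_card.mp hcard
  simp only [Finset.mem_sdiff, Finset.mem_univ, true_and, Finset.mem_insert,
    Finset.mem_singleton, not_or] at hk hl
  exact ⟨k, l, Ne.symm hk.1, Ne.symm hk.2, Ne.symm hl.1, Ne.symm hl.2, hkl⟩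

theorem Matrix.inner_toEuclideanLin_of_transpose_eq_neg {ι : Type*} [Fintype ι] [DecidableEq ι]
    {A : Matrix ι ι ℝ} (hA : Aᵀ = -A) (u v : EuclideanSpace ℝ ι) :
    ⟪A.toEuclideanLin u, v⟫ = -⟪u, A.toEuclideanLin v⟫ := by
  rw [← LinearMap.adjoint_inner_right, ← Matrix.toEuclideanLin_conjTranspose_eq_adjoint,
    Matrix.conjTranspose_eq_transpose_of_trivial, hA, map_neg, LinearMap.neg_apply,
    inner_neg_right]

namespace DRootSystem

variable {n : ℕ}

noncomputable def root (i j : Fin n) (s t : ℝ) : EuclideanSpace ℝ (Fin n) :=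
  s • EuclideanSpace.single i 1 + t • EuclideanSpace.single j 1

theorem root_comm (i j : Fin n) (s t : ℝ) : root i j s t = root j i t s := add_comm _ _

theorem root_apply (i j : Fin n) (s t : ℝ) (m : Fin n) :
    root i j s t m = (if m = i then s else 0) + (if m = j then t else 0) := by
  simp [root]

theorem inner_root_left (i j : Fin n) (s t : ℝ) (w : EuclideanSpace ℝ (Fin n)) :
    ⟪root i j s t, w⟫ = s * w i + t * w j := by
  simp [root, inner_add_left, real_inner_smul_left, EuclideanSpace.inner_single_left]

theorem neg_eq_one_or_neg_one {s : ℝ} (hs : s = 1 ∨ s = -1) : -s = 1 ∨ -s = -1 :=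
  hs.symm.imp (fun h => by rw [h, neg_neg]) (fun h => by rw [h])

theorem root_mem {i j : Fin n} (hij : i ≠ j) {s t : ℝ} (hs : s = 1 ∨ s = -1)
    (ht : t = 1 ∨ t = -1) : root i j s t ∈ DRootSystem n := by
  rcases hij.lt_or_gt with h | h
  · exact ⟨i, j, h, s, t, hs, ht, rfl⟩
  · exact ⟨j, i, h, t, s, ht, hs, root_comm i j s t⟩

theorem neg_mem {x : EuclideanSpace ℝ (Fin n)} (hx : x ∈ DRootSystem n) :
    -x ∈ DRootSystem n := by
  obtain ⟨i, j, hij, s, t, hs, ht, rfl⟩ := hx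
  exact ⟨i, j, hij, -s, -t, neg_eq_one_or_neg_one hs, neg_eq_one_or_neg_one ht,
    by rw [neg_add, neg_smul, neg_smul]⟩

theorem inner_root_self {i j : Fin n} (hij : i ≠ j) {s t : ℝ} (hs : s = 1 ∨ s = -1)
    (ht : t = 1 ∨ t = -1) : ⟪root i j s t, root i j s t⟫ = 2 := by
  rw [inner_root_left, root_apply, root_apply]
  simp only [if_neg hij, if_neg hij.symm, if_true]
  rcases hs with rfl | rfl <;> rcases ht with rfl | rfl <;> norm_num

/-- The pairs `(root i j s t, root i k s u)` with `i, j, k` distinct are, up to order, exactly the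
pairs of roots with inner product `1`; `IsFlex y` asks for the jamming constraints of `y` to hold
with equality on them. -/
structure IsFlex (y : EuclideanSpace ℝ (Fin n) → EuclideanSpace ℝ (Fin n)) : Prop where
  inner_self : ∀ ⦃i j : Fin n⦄, i ≠ j → ∀ ⦃s t : ℝ⦄, (s = 1 ∨ s = -1) → (t = 1 ∨ t = -1) →
    ⟪root i j s t, y (root i j s t)⟫ = 0
  inner_add_inner : ∀ ⦃i j k : Fin n⦄, i ≠ j → i ≠ k → j ≠ k → ∀ ⦃s t u : ℝ⦄,
    (s = 1 ∨ s = -1) → (t = 1 ∨ t = -1) → (u = 1 ∨ u = -1) →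
    ⟪root i j s t, y (root i k s u)⟫ + ⟪root i k s u, y (root i j s t)⟫ = 0

theorem isFlex_of_inner_add_inner_nonpos
    {y : EuclideanSpace ℝ (Fin n) → EuclideanSpace ℝ (Fin n)}
    (hSelf : ∀ x ∈ DRootSystem n, ⟪x, y x⟫ = 0)
    (hEdge : ∀ x ∈ DRootSystem n, ∀ x' ∈ DRootSystem n, x ≠ x' → ⟪x, x'⟫ = 1 →
      ⟪x, y x'⟫ + ⟪x', y x⟫ ≤ 0) :
    IsFlex y := by
  refine ⟨fun i j hij s t hs ht => hSelf _ (root_mem hij hs ht),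
    fun i j k hij hik hjk s t u hs ht hu => ?_⟩
  have hsub : root i k s u - root i j s t = root k j u (-t) := by
    simp only [root]; module
  refine inner_add_inner_eq_zero_of_hexagon (fun _ => neg_mem) hSelf hEdge (root_mem hij hs ht)
    (root_mem hik hs hu) (hsub ▸ root_mem hjk.symm hu (neg_eq_one_or_neg_one ht))
    (inner_root_self hij hs ht) (inner_root_self hik hs hu) ?_
  rw [inner_root_left, root_apply, root_apply]
  simp only [if_neg hij.symm, if_neg hjk, if_true, if_neg hik]
  rcases hs with rfl | rfl <;> norm_num

theorem isFlex_of_inner_map_eq_neg {f : EuclideanSpace ℝ (Fin n) → EuclideanSpace ℝ (Fin n)}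
    (hf : ∀ u v, ⟪f u, v⟫ = -⟪u, f v⟫) : IsFlex f := by
  have key : ∀ u v, ⟪u, f v⟫ + ⟪v, f u⟫ = 0 := fun u v => by
    rw [real_inner_comm (f u) v, hf]; ring
  refine ⟨fun i j _ s t _ _ => ?_, fun i j k _ _ _ s t u _ _ _ => key _ _⟩
  linarith [key (root i j s t) (root i j s t)]

theorem IsFlex.sub {y z : EuclideanSpace ℝ (Fin n) → EuclideanSpace ℝ (Fin n)} (hy : IsFlex y)
    (hz : IsFlex z) : IsFlex (y - z) := by
  refine ⟨fun i j hij s t hs ht => ?_, fun i j k hij hik hjk s t u hs ht hu => ?_⟩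
  · simp only [Pi.sub_apply, inner_sub_right, hy.inner_self hij hs ht, hz.inner_self hij hs ht,
      sub_zero]
  · have h₁ := hy.inner_add_inner hij hik hjk hs ht hu
    have h₂ := hz.inner_add_inner hij hik hjk hs ht hu
    simp only [Pi.sub_apply, inner_sub_right]
    linarith

namespace IsFlex

variable {y : EuclideanSpace ℝ (Fin n) → EuclideanSpace ℝ (Fin n)}

theorem apply_root_one_one (hy : IsFlex y)
    (hpos : ∀ i j : Fin n, i ≠ j → y (root i j 1 1) i = 0) {i j : Fin n} (hij : i ≠ j) :
    y (root i j 1 1) = 0 := by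
  have hcomm : ∀ a b : Fin n, y (root a b 1 1) = y (root b a 1 1) := fun a b => by
    rw [root_comm]
  have antisymm : ∀ {a b c : Fin n}, a ≠ b → a ≠ c → b ≠ c →
      y (root a b 1 1) c = -y (root a c 1 1) b := fun {a b c} hab hac hbc => by
    have h := hy.inner_add_inner hab hac hbc (.inl rfl) (.inl rfl) (.inl rfl)
    rw [inner_root_left, inner_root_left, hpos a c hac, hpos a b hab] at h
    linarith
  ext m
  by_cases hmi : m = i
  · subst hmi; exact hpos m j hij
  by_cases hmj : m = j
  · subst hmj; rw [hcomm]; exact hpos m i (Ne.symm hij)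
  -- symmetric in the first two indices and antisymmetric in the last two, hence zero
  have h₁ := antisymm hij (Ne.symm hmi) (Ne.symm hmj)
  have h₂ := antisymm hmi hmj hij
  have h₃ := antisymm (Ne.symm hmj) (Ne.symm hij) hmi
  rw [hcomm i m] at h₁
  rw [hcomm m j] at h₂
  rw [hcomm j i] at h₃
  simp only [PiLp.zero_apply]
  linarith

theorem root_one_neg_one_apply_of_ne (hy : IsFlex y)
    (hpos : ∀ i j : Fin n, i ≠ j → y (root i j 1 1) i = 0) {i j k : Fin n} (hij : i ≠ j)
    (hik : i ≠ k) (hjk : j ≠ k) :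
    y (root i j 1 (-1)) k = -y (root i j 1 (-1)) i := by
  have h := hy.inner_add_inner hij hik hjk (.inl rfl) (.inr rfl) (.inl rfl)
  rw [hy.apply_root_one_one hpos hik, inner_zero_right, inner_root_left] at h
  linarith

theorem root_one_neg_one_apply_self (hy : IsFlex y)
    (hpos : ∀ i j : Fin n, i ≠ j → y (root i j 1 1) i = 0) {i j k : Fin n} (hij : i ≠ j)
    (hik : i ≠ k) (hjk : j ≠ k) :
    y (root i j 1 (-1)) i = -y (root i k 1 (-1)) i := by
  have h := hy.inner_add_inner hij hik hjk (.inl rfl) (.inr rfl) (.inr rfl)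
  rw [inner_root_left, inner_root_left, hy.root_one_neg_one_apply_of_ne hpos hik hij hjk.symm,
    hy.root_one_neg_one_apply_of_ne hpos hij hik hjk] at h
  linarith

theorem apply_root_one_neg_one (hy : IsFlex y)
    (hpos : ∀ i j : Fin n, i ≠ j → y (root i j 1 1) i = 0) (hn : 4 ≤ n) {i j : Fin n}
    (hij : i ≠ j) :
    y (root i j 1 (-1)) = 0 := by
  obtain ⟨k, l, hik, hjk, hil, hjl, hkl⟩ :=
    exists_pair_ne_of_four_le_card (by simpa using hn) i j
  -- replacing the second index flips the sign, and `j → k → l → j` does so three times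
  have hi : y (root i j 1 (-1)) i = 0 := by
    linarith [hy.root_one_neg_one_apply_self hpos hij hik hjk,
      hy.root_one_neg_one_apply_self hpos hij hil hjl,
      hy.root_one_neg_one_apply_self hpos hik hil hkl]
  have hj : y (root i j 1 (-1)) j = y (root i j 1 (-1)) i := by
    have h := hy.inner_self hij (.inl rfl) (.inr rfl)
    rw [inner_root_left] at h
    linarith
  ext m
  by_cases hmi : m = i
  · subst hmi; exact hi
  by_cases hmj : m = j
  · subst hmj; rw [hj, hi]; rfl
  rw [hy.root_one_neg_one_apply_of_ne hpos hij (Ne.symm hmi) (Ne.symm hmj), hi, neg_zero]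
  rfl

theorem apply_root_neg_one_neg_one (hy : IsFlex y)
    (hpos : ∀ i j : Fin n, i ≠ j → y (root i j 1 1) i = 0) (hn : 4 ≤ n) {i j : Fin n}
    (hij : i ≠ j) :
    y (root i j (-1) (-1)) = 0 := by
  have hother : ∀ {a b k : Fin n}, a ≠ b → a ≠ k → b ≠ k →
      y (root a b (-1) (-1)) k = y (root a b (-1) (-1)) a := fun {a b k} hab hak hbk => by
    have h := hy.inner_add_inner hab hak hbk (.inr rfl) (.inr rfl) (.inl rfl)
    rw [root_comm a k, hy.apply_root_one_neg_one hpos hn (Ne.symm hak), inner_zero_right,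
      inner_root_left] at h
    linarith
  have hself := hy.inner_self hij (.inr rfl) (.inr rfl)
  rw [inner_root_left] at hself
  obtain ⟨k, -, hik, hjk, -⟩ := exists_pair_ne_of_four_le_card (by simpa using hn) i j
  have hi := hother hij hik hjk
  have hj := hother (Ne.symm hij) hjk hik
  rw [root_comm j i] at hj
  ext m
  by_cases hmi : m = i
  · subst hmi; simp only [PiLp.zero_apply]; linarith
  by_cases hmj : m = j
  · subst hmj; simp only [PiLp.zero_apply]; linarith
  rw [hother hij (Ne.symm hmi) (Ne.symm hmj)]
  simp only [PiLp.zero_apply]; linarith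

theorem apply_root_eq_zero (hy : IsFlex y)
    (hpos : ∀ i j : Fin n, i ≠ j → y (root i j 1 1) i = 0) (hn : 4 ≤ n) {i j : Fin n}
    (hij : i ≠ j) {s t : ℝ} (hs : s = 1 ∨ s = -1) (ht : t = 1 ∨ t = -1) : y (root i j s t) = 0 := by
  rcases hs with rfl | rfl <;> rcases ht with rfl | rfl
  · exact hy.apply_root_one_one hpos hij
  · exact hy.apply_root_one_neg_one hpos hn hij
  · rw [root_comm]; exact hy.apply_root_one_neg_one hpos hn (Ne.symm hij)
  · exact hy.apply_root_neg_one_neg_one hpos hn hij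

end IsFlex

noncomputable def rotationMatrix (y : EuclideanSpace ℝ (Fin n) → EuclideanSpace ℝ (Fin n)) :
    Matrix (Fin n) (Fin n) ℝ :=
  Matrix.of fun i j => if i = j then 0 else y (root i j 1 1) i

theorem toEuclideanLin_apply_root (A : Matrix (Fin n) (Fin n) ℝ) (i j : Fin n) (s t : ℝ)
    (m : Fin n) : A.toEuclideanLin (root i j s t) m = s * A m i + t * A m j := by
  simp [root, Matrix.mulVec_single]

theorem IsFlex.rotationMatrix_transpose {y : EuclideanSpace ℝ (Fin n) → EuclideanSpace ℝ (Fin n)}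
    (hy : IsFlex y) : (rotationMatrix y)ᵀ = -rotationMatrix y := by
  ext i j
  by_cases hij : i = j
  · simp [rotationMatrix, hij]
  · have h := hy.inner_self hij (.inl rfl) (.inl rfl)
    rw [inner_root_left] at h
    simp only [rotationMatrix, Matrix.transpose_apply, Matrix.of_apply, Matrix.neg_apply,
      if_neg hij, if_neg (Ne.symm hij), root_comm j i]
    linarith

end DRootSystem

open DRootSystem

theorem statement4 (n : ℕ) (hn : 4 ≤ n) :
    ∀ y : EuclideanSpace ℝ (Fin n) → EuclideanSpace ℝ (Fin n),
      (∀ x ∈ DRootSystem n, ⟪x, y x⟫ = 0) →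
      (∀ x ∈ DRootSystem n, ∀ x' ∈ DRootSystem n, x ≠ x' → ⟪x, x'⟫ = 1 →
        ⟪x, y x'⟫ + ⟪x', y x⟫ ≤ 0) →
      ∃ Φ : EuclideanSpace ℝ (Fin n) →ₗ[ℝ] EuclideanSpace ℝ (Fin n),
        (∀ u v, ⟪Φ u, v⟫ = -⟪u, Φ v⟫) ∧ ∀ x ∈ DRootSystem n, y x = Φ x := by
  intro y hSelf hEdge
  have hy : IsFlex y := isFlex_of_inner_add_inner_nonpos hSelf hEdge
  set Φ := (rotationMatrix y).toEuclideanLin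
  have hΦ : ∀ u v, ⟪Φ u, v⟫ = -⟪u, Φ v⟫ :=
    Matrix.inner_toEuclideanLin_of_transpose_eq_neg hy.rotationMatrix_transpose
  have hpos : ∀ i j : Fin n, i ≠ j → (y - Φ) (root i j 1 1) i = 0 := fun i j hij => by
    simp [Φ, toEuclideanLin_apply_root, rotationMatrix, hij]
  refine ⟨Φ, hΦ, ?_⟩
  rintro x ⟨i, j, hij, s, t, hs, ht, rfl⟩
  exact sub_eq_zero.mp <| (hy.sub (isFlex_of_inner_map_eq_neg hΦ)).apply_root_eq_zero hpos hn
    hij.ne hs ht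
end

section
/- The E_8 root system X ⊂ ℝ^8, consisting of the 112 vectors ±e_i ± e_j (1 ≤ i < j ≤ 8, all sign choices) together with the 128 vectors all of whose coordinates are ±1/2 with an even number of minus signs, is infinitesimally jammed: every map y : X → ℝ^8 satisfying ⟨x, y(x)⟩ = 0 for all x ∈ X and ⟨x, y(x')⟩ + ⟨x', y(x)⟩ ≤ 0 for all distinct x, x' ∈ X with ⟨x, x'⟩ = 1 admits a skew-symmetric linear map Φ : ℝ^8 → ℝ^8 (⟨Φu, v⟩ = −⟨u, Φv⟩ for all u, v) with y(x) = Φ x for all x ∈ X. -/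
open scoped RealInnerProductSpace

/-- The `E₈` root system: the vectors `±eᵢ ± eⱼ` (`i < j`) together with the vectors
all of whose coordinates are `±1/2`, with an even number of minus signs. -/
def E8RootSystem : Set (EuclideanSpace ℝ (Fin 8)) :=
  DRootSystem 8 ∪
    { v | (∀ i, v i = 1 / 2 ∨ v i = -(1 / 2)) ∧ Even {i : Fin 8 | v i = -(1 / 2)}.ncard }

/-!
Write `g(a, b) = ⟪a, y b⟫ + ⟪b, y a⟫` for the first-order change of `⟪a, b⟫`. The condition
`⟪x, y x⟫ = 0` turns every linear relation `u + v = w` among roots into a linear relation among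
values of `g`. For `⟪a, b⟫ = 1` the roots `±a, ±b, ±(a - b)` form a hexagon along whose edges
`g ≤ 0`, while these relations make the six values sum to zero; so `g = 0` on all such pairs.
Pairs at inner product `-1`, `-2` and `0` are reduced to this case by further relations; for
orthogonal `a, b` one uses three pairs of roots with the same sum `a + b`. Once `g` vanishes on all
pairs of roots, the linear map that agrees with `y` on a basis of roots is skew-symmetric and
agrees with `y` on every root.

For `E₈` the input is that the roots are the vectors of squared length `2` in the even unimodular
lattice `D₈⁺`, so that inner products of roots are integers and `a - b` is a root whenever
`⟪a, b⟫ = 1`.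
-/

section General

variable {E : Type*} [NormedAddCommGroup E] [InnerProductSpace ℝ E]

/-- The first-order change of `⟪a, b⟫` when every point `x` moves to `x + t • y x`. -/
def innerVariation (y : E → E) (a b : E) : ℝ := ⟪a, y b⟫ + ⟪b, y a⟫

lemma exists_skew_eq_of_innerVariation_eq_zero {X : Set E} {y : E → E}
    (hX : Submodule.span ℝ X = ⊤) (h : ∀ a ∈ X, ∀ b ∈ X, innerVariation y a b = 0) :
    ∃ Φ : E →ₗ[ℝ] E, (∀ u v, ⟪Φ u, v⟫ = -⟪u, Φ v⟫) ∧ ∀ x ∈ X, y x = Φ x := by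
  obtain ⟨B, hBX, hspan, hli⟩ := exists_linearIndependent ℝ X
  let b := Module.Basis.mk hli (by rw [Subtype.range_coe, hspan, hX])
  have hbX (i : B) : b i ∈ X := by simpa [b] using hBX i.2
  let Φ := b.constr ℝ fun i => y (b i)
  have hΦ (i : B) : Φ (b i) = y (b i) := b.constr_basis ℝ _ i
  have hskew (u v : E) : ⟪Φ u, v⟫ + ⟪u, Φ v⟫ = 0 := by
    have : (innerₗ E).compl₁₂ Φ LinearMap.id + (innerₗ E).compl₂ Φ = 0 :=
      LinearMap.ext_basis b b fun i j => by
        simpa [hΦ, real_inner_comm, innerVariation, add_comm] using h _ (hbX j) _ (hbX i)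
    simpa using LinearMap.congr_fun₂ this u v
  refine ⟨Φ, fun u v => eq_neg_of_add_eq_zero_left (hskew u v),
    fun x hx => InnerProductSpace.ext_inner_left_basis b fun i => ?_⟩
  have h₁ := h _ (hbX i) x hx
  have h₂ := hskew (b i) x
  rw [hΦ, real_inner_comm] at h₂
  unfold innerVariation at h₁
  linarith

/-- A root system of type ADE, with roots of squared length `2`: for `⟪a, b⟫ = 1` the
reflection of `a` in `b` is `a - b`. -/
structure IsSimplyLacedRootSet (X : Set E) : Prop where
  inner_self : ∀ x ∈ X, ⟪x, x⟫ = 2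
  inner_int : ∀ a ∈ X, ∀ b ∈ X, ∃ n : ℤ, ⟪a, b⟫ = n
  neg_mem : ∀ x ∈ X, -x ∈ X
  sub_mem : ∀ a ∈ X, ∀ b ∈ X, ⟪a, b⟫ = 1 → a - b ∈ X

namespace IsSimplyLacedRootSet

variable {X : Set E} (hX : IsSimplyLacedRootSet X) {a b : E}
include hX

lemma ne_of_inner_eq_one (ha : a ∈ X) (h : ⟪a, b⟫ = 1) : a ≠ b := by
  rintro rfl
  linarith [hX.inner_self a ha]

lemma add_mem (ha : a ∈ X) (hb : b ∈ X) (h : ⟪a, b⟫ = -1) : a + b ∈ X := by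
  simpa using hX.sub_mem a ha (-b) (hX.neg_mem b hb) (by simp [inner_neg_right, h])

lemma inner_cases (ha : a ∈ X) (hb : b ∈ X) :
    b = a ∨ b = -a ∨ ⟪a, b⟫ = 1 ∨ ⟪a, b⟫ = 0 ∨ ⟪a, b⟫ = -1 := by
  obtain ⟨n, hn⟩ := hX.inner_int a ha b hb
  have hsub : ⟪a - b, a - b⟫ = 4 - 2 * n := by
    simp only [inner_sub_left, inner_sub_right, real_inner_comm a b, hX.inner_self a ha,
      hX.inner_self b hb, hn]
    ring
  have hadd : ⟪a + b, a + b⟫ = 4 + 2 * n := by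
    simp only [inner_add_left, inner_add_right, real_inner_comm a b, hX.inner_self a ha,
      hX.inner_self b hb, hn]
    ring
  have hlo : -2 ≤ n := by
    have := real_inner_self_nonneg (x := a + b)
    rw [hadd] at this
    exact_mod_cast (by linarith : (-2 : ℝ) ≤ n)
  have hhi : n ≤ 2 := by
    have := real_inner_self_nonneg (x := a - b)
    rw [hsub] at this
    exact_mod_cast (by linarith : (n : ℝ) ≤ 2)
  interval_cases n
  · right; left
    rw [eq_neg_iff_add_eq_zero, add_comm, ← inner_self_eq_zero (𝕜 := ℝ), hadd]; norm_num
  · simp [hn]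
  · simp [hn]
  · simp [hn]
  · left
    rw [eq_comm, ← sub_eq_zero, ← inner_self_eq_zero (𝕜 := ℝ), hsub]; norm_num

lemma add_sub_mem {u : E} (ha : a ∈ X) (hb : b ∈ X) (hu : u ∈ X) (hab : ⟪a, b⟫ = 0)
    (hau : ⟪a, u⟫ = 1) (hbu : ⟪b, u⟫ = 1) : a + b - u ∈ X := by
  have h : ⟪b, a - u⟫ = -1 := by
    rw [inner_sub_right, real_inner_comm, hab, hbu]; norm_num
  convert hX.add_mem hb (hX.sub_mem a ha u hu hau) h using 1
  abel

end IsSimplyLacedRootSet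

/-- The hypotheses on `y` in the definition of infinitesimal jamming, for maximal inner
product `1`. -/
structure IsInfinitesimalMotion (X : Set E) (y : E → E) : Prop where
  inner_self_eq_zero : ∀ x ∈ X, ⟪x, y x⟫ = 0
  innerVariation_nonpos : ∀ x ∈ X, ∀ x' ∈ X, x ≠ x' → ⟪x, x'⟫ = 1 → innerVariation y x x' ≤ 0

/-- Adjacency refers to the graph on `X` that joins vectors with inner product `1`. -/
def HasAdjacentCommonNeighbors (X : Set E) (a b : E) : Prop :=
  ∃ u ∈ X, ∃ v ∈ X, ⟪u, a⟫ = 1 ∧ ⟪u, b⟫ = 1 ∧ ⟪v, a⟫ = 1 ∧ ⟪v, b⟫ = 1 ∧ ⟪u, v⟫ = 1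

lemma HasAdjacentCommonNeighbors.symm {X : Set E} {a b : E}
    (h : HasAdjacentCommonNeighbors X a b) : HasAdjacentCommonNeighbors X b a :=
  let ⟨u, hu, v, hv, hua, hub, hva, hvb, huv⟩ := h
  ⟨u, hu, v, hv, hub, hua, hvb, hva, huv⟩

lemma inner_add_inner_eq_zero_of_add_eq {y : E → E} {a b c : E} (h : a + b = c)
    (hc : ⟪c, y c⟫ = 0) : ⟪a, y c⟫ + ⟪b, y c⟫ = 0 := by
  rw [← inner_add_left, h, hc]

lemma innerVariation_add_innerVariation {y : E → E} {a b c d : E} (h : a + b = c + d)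
    (ha : ⟪a, y a⟫ = 0) (hb : ⟪b, y b⟫ = 0) (hc : ⟪c, y c⟫ = 0) (hd : ⟪d, y d⟫ = 0) :
    innerVariation y a b + innerVariation y c d =
      innerVariation y a c + innerVariation y a d + innerVariation y b c +
        innerVariation y b d := by
  have h₁ : ⟪c + d, y a⟫ = ⟪b, y a⟫ := by rw [← h, inner_add_left, ha, zero_add]
  have h₂ : ⟪c + d, y b⟫ = ⟪a, y b⟫ := by rw [← h, inner_add_left, hb, add_zero]
  have h₃ : ⟪a + b, y c⟫ = ⟪d, y c⟫ := by rw [h, inner_add_left, hc, zero_add]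
  have h₄ : ⟪a + b, y d⟫ = ⟪c, y d⟫ := by rw [h, inner_add_left, hd, add_zero]
  simp only [inner_add_left] at h₁ h₂ h₃ h₄
  simp only [innerVariation]
  linarith

namespace IsInfinitesimalMotion

variable {X : Set E} {y : E → E} (hy : IsInfinitesimalMotion X y) (hX : IsSimplyLacedRootSet X)
  {a b : E}
include hy hX

lemma innerVariation_nonpos_of_inner_eq_one (ha : a ∈ X) (hb : b ∈ X) (h : ⟪a, b⟫ = 1) :
    innerVariation y a b ≤ 0 :=
  hy.innerVariation_nonpos a ha b hb (hX.ne_of_inner_eq_one ha h) h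

/-- The six roots `±a, ±b, ±(a - b)` form a hexagon in which each root is the sum of its two
neighbours; summing the resulting relations shows that the six nonpositive variations along the
edges add up to zero. -/
lemma innerVariation_eq_zero_of_inner_eq_one (ha : a ∈ X) (hb : b ∈ X) (hab : ⟪a, b⟫ = 1) :
    innerVariation y a b = 0 := by
  obtain ⟨c, hc_def⟩ : ∃ c, c = a - b := ⟨_, rfl⟩
  have hc : c ∈ X := hc_def ▸ hX.sub_mem a ha b hb hab
  have hna := hX.neg_mem a ha
  have hnb := hX.neg_mem b hb
  have hnc := hX.neg_mem c hc
  have ha2 := hX.inner_self a ha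
  have hb2 := hX.inner_self b hb
  have hba : ⟪b, a⟫ = 1 := by rwa [real_inner_comm]
  have hac : ⟪a, c⟫ = 1 := by rw [hc_def, inner_sub_right]; linarith
  have hbc : ⟪b, -c⟫ = 1 := by rw [hc_def, inner_neg_right, inner_sub_right]; linarith
  have hcb : ⟪-b, c⟫ = 1 := by rw [hc_def, inner_neg_left, inner_sub_right]; linarith
  have hy0 := hy.inner_self_eq_zero
  have e₁ := inner_add_inner_eq_zero_of_add_eq (show b + c = a by rw [hc_def]; abel) (hy0 a ha)
  have e₂ := inner_add_inner_eq_zero_of_add_eq (show a + -c = b by rw [hc_def]; abel) (hy0 b hb)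
  have e₃ := inner_add_inner_eq_zero_of_add_eq (show a + -b = c by rw [hc_def]; abel) (hy0 c hc)
  have e₄ := inner_add_inner_eq_zero_of_add_eq (show -b + -c = -a by rw [hc_def]; abel)
    (hy0 _ hna)
  have e₅ := inner_add_inner_eq_zero_of_add_eq (show -a + c = -b by rw [hc_def]; abel)
    (hy0 _ hnb)
  have e₆ := inner_add_inner_eq_zero_of_add_eq (show -a + b = -c by rw [hc_def]; abel)
    (hy0 _ hnc)
  have l₁ := hy.innerVariation_nonpos_of_inner_eq_one hX ha hb hab
  have l₂ := hy.innerVariation_nonpos_of_inner_eq_one hX ha hc hac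
  have l₃ := hy.innerVariation_nonpos_of_inner_eq_one hX hb hnc hbc
  have l₄ := hy.innerVariation_nonpos_of_inner_eq_one hX hna hnb (by rwa [inner_neg_neg])
  have l₅ := hy.innerVariation_nonpos_of_inner_eq_one hX hna hnc (by rwa [inner_neg_neg])
  have l₆ := hy.innerVariation_nonpos_of_inner_eq_one hX hnb hc hcb
  unfold innerVariation at *
  linarith

lemma innerVariation_eq_zero_of_inner_eq_neg_one (ha : a ∈ X) (hb : b ∈ X) (hab : ⟪a, b⟫ = -1) :
    innerVariation y a b = 0 := by
  have hw := hX.add_mem ha hb hab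
  have ha2 := hX.inner_self a ha
  have hb2 := hX.inner_self b hb
  have h₁ := hy.innerVariation_eq_zero_of_inner_eq_one hX ha hw
    (by rw [inner_add_right]; linarith)
  have h₂ := hy.innerVariation_eq_zero_of_inner_eq_one hX hb hw
    (by rw [inner_add_right, real_inner_comm]; linarith)
  have e := inner_add_inner_eq_zero_of_add_eq rfl (hy.inner_self_eq_zero _ hw)
  have ha0 := hy.inner_self_eq_zero a ha
  have hb0 := hy.inner_self_eq_zero b hb
  simp only [innerVariation, inner_add_left] at *
  linarith

lemma innerVariation_neg_self_eq_zero (ha : a ∈ X) (hc : ∃ c ∈ X, ⟪c, a⟫ = 1) :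
    innerVariation y a (-a) = 0 := by
  obtain ⟨c, hc, hac⟩ := hc
  rw [real_inner_comm] at hac
  obtain ⟨d, hd_def⟩ : ∃ d, d = a - c := ⟨_, rfl⟩
  have hd : d ∈ X := hd_def ▸ hX.sub_mem a ha c hc hac
  have ha2 := hX.inner_self a ha
  have had : ⟪a, d⟫ = 1 := by rw [hd_def, inner_sub_right]; linarith
  have hna := hX.neg_mem a ha
  have h₁ := hy.innerVariation_eq_zero_of_inner_eq_one hX ha hc hac
  have h₂ := hy.innerVariation_eq_zero_of_inner_eq_one hX ha hd had
  have h₃ := hy.innerVariation_eq_zero_of_inner_eq_neg_one hX hna hc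
    (by rw [inner_neg_left, hac])
  have h₄ := hy.innerVariation_eq_zero_of_inner_eq_neg_one hX hna hd
    (by rw [inner_neg_left, had])
  have e₁ : ⟪c + d, y (-a)⟫ = ⟪a, y (-a)⟫ := by rw [hd_def, add_sub_cancel]
  have e₂ := inner_add_inner_eq_zero_of_add_eq (show c + d = a by rw [hd_def]; abel)
    (hy.inner_self_eq_zero a ha)
  have ha0 := hy.inner_self_eq_zero a ha
  simp only [innerVariation, inner_add_left, inner_neg_left] at *
  linarith

/-- The pairs `{a, b}`, `{u, a + b - u}` and `{v, a + b - v}` have the same sum and any two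
roots from different pairs have inner product `1`, so `innerVariation_add_innerVariation` shows
that the three values of `innerVariation` on the pairs add up to zero pairwise. -/
lemma innerVariation_eq_zero_of_inner_eq_zero (ha : a ∈ X) (hb : b ∈ X) (hab : ⟪a, b⟫ = 0)
    (hn : HasAdjacentCommonNeighbors X a b) : innerVariation y a b = 0 := by
  obtain ⟨u, hu, v, hv, hua, hub, hva, hvb, huv⟩ := hn
  rw [real_inner_comm] at hua hub hva hvb
  obtain ⟨u', hu'_def⟩ : ∃ u', u' = a + b - u := ⟨_, rfl⟩
  obtain ⟨v', hv'_def⟩ : ∃ v', v' = a + b - v := ⟨_, rfl⟩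
  have hu' : u' ∈ X := hu'_def ▸ hX.add_sub_mem ha hb hu hab hua hub
  have hv' : v' ∈ X := hv'_def ▸ hX.add_sub_mem ha hb hv hab hva hvb
  have := hX.inner_self a ha
  have := hX.inner_self b hb
  have := hX.inner_self u hu
  have := hX.inner_self v hv
  have := real_inner_comm a b
  have := real_inner_comm a u
  have := real_inner_comm b u
  have h1 {p q : E} (hp : p ∈ X) (hq : q ∈ X) (h : ⟪p, q⟫ = 1) : innerVariation y p q = 0 :=
    hy.innerVariation_eq_zero_of_inner_eq_one hX hp hq h
  have hy0 := hy.inner_self_eq_zero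
  have r₁ := innerVariation_add_innerVariation (show a + b = u + u' by rw [hu'_def]; abel)
    (hy0 a ha) (hy0 b hb) (hy0 u hu) (hy0 _ hu')
  have r₂ := innerVariation_add_innerVariation (show a + b = v + v' by rw [hv'_def]; abel)
    (hy0 a ha) (hy0 b hb) (hy0 v hv) (hy0 _ hv')
  have r₃ := innerVariation_add_innerVariation (show u + u' = v + v' by rw [hu'_def, hv'_def]; abel)
    (hy0 u hu) (hy0 _ hu') (hy0 v hv) (hy0 _ hv')
  linarith [h1 ha hu hua, h1 hb hu hub, h1 ha hv hva, h1 hb hv hvb, h1 hu hv huv,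
    h1 ha hu' (by rw [hu'_def, inner_sub_right, inner_add_right]; linarith),
    h1 hb hu' (by rw [hu'_def, inner_sub_right, inner_add_right]; linarith),
    h1 ha hv' (by rw [hv'_def, inner_sub_right, inner_add_right]; linarith),
    h1 hb hv' (by rw [hv'_def, inner_sub_right, inner_add_right]; linarith),
    h1 hu hv' (by rw [hv'_def, inner_sub_right, inner_add_right]; linarith),
    h1 hu' hv (by rw [hu'_def, inner_sub_left, inner_add_left]; linarith),
    h1 hu' hv' (by rw [hu'_def, hv'_def]; simp only [inner_sub_left, inner_sub_right,
      inner_add_left, inner_add_right]; linarith)]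

lemma innerVariation_eq_zero (hc : ∀ a ∈ X, ∃ c ∈ X, ⟪c, a⟫ = 1)
    (hn : ∀ a ∈ X, ∀ b ∈ X, ⟪a, b⟫ = 0 → HasAdjacentCommonNeighbors X a b)
    (ha : a ∈ X) (hb : b ∈ X) : innerVariation y a b = 0 := by
  rcases hX.inner_cases ha hb with rfl | rfl | h | h | h
  · simp [innerVariation, hy.inner_self_eq_zero _ ha]
  · exact hy.innerVariation_neg_self_eq_zero hX ha (hc a ha)
  · exact hy.innerVariation_eq_zero_of_inner_eq_one hX ha hb h
  · exact hy.innerVariation_eq_zero_of_inner_eq_zero hX ha hb h (hn a ha b hb h)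
  · exact hy.innerVariation_eq_zero_of_inner_eq_neg_one hX ha hb h

end IsInfinitesimalMotion

end General

local notation "ℝ⁸" => EuclideanSpace ℝ (Fin 8)

lemma EuclideanSpace.real_inner_eq_sum {n : ℕ} (x y : EuclideanSpace ℝ (Fin n)) :
    ⟪x, y⟫ = ∑ i, x i * y i := by
  simp [PiLp.inner_apply, mul_comm]

lemma exists_ne_ne_of_four_le_card {α : Type*} [Fintype α] (i j : α) (h : 4 ≤ Fintype.card α) :
    ∃ q r : α, q ≠ r ∧ q ≠ i ∧ q ≠ j ∧ r ≠ i ∧ r ≠ j := by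
  classical
  have : 1 < ({i, j}ᶜ : Finset α).card := by
    rw [Finset.card_compl]
    have := Finset.card_le_two (a := i) (b := j)
    omega
  obtain ⟨q, hq, r, hr, hqr⟩ := Finset.one_lt_card.mp this
  simp only [Finset.mem_compl, Finset.mem_insert, Finset.mem_singleton, not_or] at hq hr
  exact ⟨q, r, hqr, hq.1, hq.2, hr.1, hr.2⟩

section DRootSystem

variable {n : ℕ} {i j : Fin n} {s t : ℝ}

lemma smul_single_add_smul_single_apply (k : Fin n) :
    (s • EuclideanSpace.single i (1 : ℝ) + t • EuclideanSpace.single j (1 : ℝ)) k =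
      (if k = i then s else 0) + (if k = j then t else 0) := by
  simp [PiLp.single_apply]

lemma inner_smul_single_add_smul_single_left (v : EuclideanSpace ℝ (Fin n)) :
    ⟪s • EuclideanSpace.single i (1 : ℝ) + t • EuclideanSpace.single j (1 : ℝ), v⟫ =
      s * v i + t * v j := by
  simp [inner_add_left, real_inner_smul_left, EuclideanSpace.inner_single_left]

lemma smul_single_add_smul_single_mem_DRootSystem (hij : i ≠ j) (hs : s = 1 ∨ s = -1)
    (ht : t = 1 ∨ t = -1) :
    s • EuclideanSpace.single i (1 : ℝ) + t • EuclideanSpace.single j (1 : ℝ) ∈ DRootSystem n := by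
  rcases hij.lt_or_gt with h | h
  · exact ⟨i, j, h, s, t, hs, ht, rfl⟩
  · exact ⟨j, i, h, t, s, ht, hs, add_comm _ _⟩

lemma mem_DRootSystem_of_sum_sq_eq_two {v : EuclideanSpace ℝ (Fin n)} (m : Fin n → ℤ)
    (hv : ∀ k, v k = m k) (hm : ∑ k, m k ^ 2 = 2) : v ∈ DRootSystem n := by
  classical
  have hunit (k : Fin n) : m k = 0 ∨ m k = 1 ∨ m k = -1 := by
    have : m k ^ 2 ≤ 2 := hm ▸ Finset.single_le_sum (fun l _ => sq_nonneg (m l)) (Finset.mem_univ k)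
    have : -1 ≤ m k ∧ m k ≤ 1 := by constructor <;> nlinarith
    omega
  set S := Finset.univ.filter fun k => m k ≠ 0
  have hcard : S.card = 2 := by
    have hS1 : ∀ k ∈ S, m k ^ 2 = 1 := fun k hk => by
      rcases hunit k with h | h | h <;> simp_all [S]
    have : (S.card : ℤ) = 2 := calc
      (S.card : ℤ) = ∑ k ∈ S, m k ^ 2 := by simp [Finset.sum_congr rfl hS1]
      _ = ∑ k, m k ^ 2 := Finset.sum_filter_of_ne fun k _ h => by simpa using h
      _ = 2 := hm
    exact_mod_cast this
  obtain ⟨i, j, hij, hS⟩ := Finset.card_eq_two.mp hcard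
  have hsign {k : Fin n} (hk : k ∈ S) : (m k : ℝ) = 1 ∨ (m k : ℝ) = -1 := by
    have : m k ≠ 0 := (Finset.mem_filter.mp hk).2
    rcases hunit k with h | h | h
    exacts [absurd h this, .inl (by simp [h]), .inr (by simp [h])]
  have hzero {k : Fin n} (hki : k ≠ i) (hkj : k ≠ j) : m k = 0 := by
    by_contra h
    have : k ∈ S := by simp [S, h]
    simp [hS, hki, hkj] at this
  convert smul_single_add_smul_single_mem_DRootSystem hij (hsign (k := i) (by simp [hS]))
    (hsign (k := j) (by simp [hS])) using 1
  ext k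
  rw [smul_single_add_smul_single_apply, hv]
  by_cases hki : k = i
  · simp [hki, hij]
  by_cases hkj : k = j
  · simp [hkj, Ne.symm hij]
  simp [hki, hkj, hzero hki hkj]

end DRootSystem

/-- The lattice `D₈⁺ = D₈ ∪ (D₈ + ½ (1, …, 1))`. -/
def e8Lattice : AddSubgroup ℝ⁸ where
  carrier := {v | ∃ n : Fin 8 → ℤ, ∃ e : ℤ, Even (∑ i, n i) ∧ ∀ i, v i = n i + e / 2}
  add_mem' := by
    rintro v w ⟨n, e, hn, hv⟩ ⟨m, f, hm, hw⟩
    refine ⟨n + m, e + f, by simpa [Finset.sum_add_distrib] using hn.add hm, fun i => ?_⟩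
    simp only [PiLp.add_apply, hv, hw, Pi.add_apply]
    push_cast; ring
  zero_mem' := ⟨0, 0, by simp, by simp⟩
  neg_mem' := by
    rintro v ⟨n, e, hn, hv⟩
    refine ⟨-n, -e, by simpa using hn.neg, fun i => ?_⟩
    simp only [PiLp.neg_apply, hv, Pi.neg_apply]
    push_cast; ring

lemma inner_int_of_mem_e8Lattice {a b : ℝ⁸} (ha : a ∈ e8Lattice) (hb : b ∈ e8Lattice) :
    ∃ k : ℤ, ⟪a, b⟫ = k := by
  obtain ⟨n, e, ⟨N, hN⟩, ha⟩ := ha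
  obtain ⟨m, f, ⟨M, hM⟩, hb⟩ := hb
  refine ⟨∑ i, n i * m i + f * N + e * M + 2 * e * f, ?_⟩
  have hN' : ∑ i, (n i : ℝ) = N + N := by exact_mod_cast hN
  have hM' : ∑ i, (m i : ℝ) = M + M := by exact_mod_cast hM
  simp only [EuclideanSpace.real_inner_eq_sum, ha, hb, add_mul, mul_add, Finset.sum_add_distrib,
    ← Finset.sum_mul, ← Finset.mul_sum, hN', hM', Finset.sum_const, Finset.card_univ,
    Fintype.card_fin, nsmul_eq_mul]
  push_cast
  ring

lemma sum_eq_four_sub_ncard {v : ℝ⁸} (hv : ∀ i, v i = 1 / 2 ∨ v i = -(1 / 2)) :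
    ∑ i, v i = 4 - ({i | v i = -(1 / 2)}.ncard : ℝ) := by
  classical
  have h (i : Fin 8) : v i = 1 / 2 - if v i = -(1 / 2) then 1 else 0 := by
    rcases hv i with h | h <;> simp [h] <;> norm_num
  rw [Finset.sum_congr rfl fun i _ => h i, Finset.sum_sub_distrib, Finset.sum_boole,
    ← Set.ncard_coe_finset, Finset.coe_filter_univ]
  norm_num

lemma mem_e8Lattice_of_mem_E8RootSystem {v : ℝ⁸} (hv : v ∈ E8RootSystem) : v ∈ e8Lattice := by
  rcases hv with ⟨i, j, hij, s, t, hs, ht, rfl⟩ | ⟨hv, hneg⟩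
  · have hint (s : ℝ) (hs : s = 1 ∨ s = -1) : ∃ σ : ℤ, Odd σ ∧ s = σ := by
      rcases hs with rfl | rfl
      exacts [⟨1, odd_one, by simp⟩, ⟨-1, by decide, by simp⟩]
    obtain ⟨σ, hσ, rfl⟩ := hint s hs
    obtain ⟨τ, hτ, rfl⟩ := hint t ht
    refine ⟨fun k => (if k = i then σ else 0) + (if k = j then τ else 0), 0, ?_, fun k => ?_⟩
    · simpa [Finset.sum_add_distrib] using hσ.add_odd hτ
    · rw [smul_single_add_smul_single_apply]
      push_cast [apply_ite (Int.cast : ℤ → ℝ)]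
      ring
  · obtain ⟨c, hc⟩ := hneg
    have hn (k : Fin 8) : ((if v k = -(1 / 2) then -1 else 0 : ℤ) : ℝ) = v k - 1 / 2 := by
      rcases hv k with h | h <;> simp [h] <;> norm_num
    refine ⟨fun k => if v k = -(1 / 2) then -1 else 0, 1, ⟨-c, ?_⟩, fun k => by rw [hn]; ring⟩
    have : ((∑ k, (if v k = -(1 / 2) then -1 else 0 : ℤ) : ℤ) : ℝ) = -c + -c := by
      rw [Int.cast_sum, Finset.sum_congr rfl fun k _ => hn k, Finset.sum_sub_distrib,
        sum_eq_four_sub_ncard hv, hc, Finset.sum_const, Finset.card_univ, Fintype.card_fin,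
        nsmul_eq_mul]
      push_cast
      ring
    exact_mod_cast this

lemma inner_self_of_mem_E8RootSystem {v : ℝ⁸} (hv : v ∈ E8RootSystem) : ⟪v, v⟫ = 2 := by
  rcases hv with ⟨i, j, hij, s, t, hs, ht, rfl⟩ | ⟨hv, -⟩
  · rw [inner_smul_single_add_smul_single_left, smul_single_add_smul_single_apply,
      smul_single_add_smul_single_apply]
    rcases hs with rfl | rfl <;> rcases ht with rfl | rfl <;> norm_num [hij.ne, hij.ne']
  · rw [EuclideanSpace.real_inner_eq_sum, Finset.sum_congr rfl fun i _ => show v i * v i = 1 / 4 by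
      rcases hv i with h | h <;> rw [h] <;> norm_num]
    norm_num

lemma mem_E8RootSystem_of_mem_e8Lattice {v : ℝ⁸} (hv : v ∈ e8Lattice) (h2 : ⟪v, v⟫ = 2) :
    v ∈ E8RootSystem := by
  obtain ⟨n, e, ⟨N, hN⟩, hv⟩ := hv
  rw [EuclideanSpace.real_inner_eq_sum] at h2
  obtain ⟨f, rfl | rfl⟩ := Int.even_or_odd' e
  · left
    refine mem_DRootSystem_of_sum_sq_eq_two (fun k => n k + f) (fun k => by simp [hv]) ?_
    have : ((∑ k, (n k + f) ^ 2 : ℤ) : ℝ) = 2 := by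
      push_cast
      rw [← h2]
      exact Finset.sum_congr rfl fun k _ => by rw [hv]; push_cast; ring
    exact_mod_cast this
  · right
    have hquarter (k : Fin 8) : 1 / 4 ≤ v k * v k := by
      have h : 0 ≤ (n k + f) * (n k + f + 1) := by
        rcases le_or_gt 0 (n k + f) with h | h <;> nlinarith
      have h' : (0 : ℝ) ≤ (n k + f) * (n k + f + 1) := by exact_mod_cast h
      rw [hv]
      push_cast
      nlinarith
    have hhalf (k : Fin 8) : v k = 1 / 2 ∨ v k = -(1 / 2) := by
      have hsum : ∑ k, v k * v k = ∑ _k : Fin 8, (1 / 4 : ℝ) := by rw [h2]; norm_num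
      have := (Finset.sum_eq_sum_iff_of_le fun k _ => hquarter k).mp hsum.symm k (Finset.mem_univ k)
      have : (v k - 1 / 2) * (v k + 1 / 2) = 0 := by linarith
      rcases mul_eq_zero.mp this with h | h
      exacts [.inl (by linarith), .inr (by linarith)]
    refine ⟨hhalf, ?_⟩
    have hsum := sum_eq_four_sub_ncard hhalf
    have hN' : ∑ k, (n k : ℝ) = N + N := by exact_mod_cast hN
    rw [Finset.sum_congr rfl fun k _ => hv k, Finset.sum_add_distrib, hN'] at hsum
    have hc : (({k | v k = -(1 / 2)}.ncard : ℕ) : ℤ) = -(N + N) - 8 * f := by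
      have : (({k | v k = -(1 / 2)}.ncard : ℕ) : ℝ) = -(N + N) - 8 * f := by
        simp only [Finset.sum_const, Finset.card_univ, Fintype.card_fin, nsmul_eq_mul] at hsum
        push_cast at hsum
        linarith
      exact_mod_cast this
    exact (Int.even_coe_nat _).mp ⟨-N - 4 * f, by rw [hc]; ring⟩

theorem isSimplyLacedRootSet_E8RootSystem : IsSimplyLacedRootSet E8RootSystem where
  inner_self _ := inner_self_of_mem_E8RootSystem
  inner_int _ ha _ hb :=
    inner_int_of_mem_e8Lattice (mem_e8Lattice_of_mem_E8RootSystem ha)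
      (mem_e8Lattice_of_mem_E8RootSystem hb)
  neg_mem x hx := mem_E8RootSystem_of_mem_e8Lattice
    (neg_mem (mem_e8Lattice_of_mem_E8RootSystem hx))
    (by rw [inner_neg_neg, inner_self_of_mem_E8RootSystem hx])
  sub_mem a ha b hb hab := mem_E8RootSystem_of_mem_e8Lattice
    (sub_mem (mem_e8Lattice_of_mem_E8RootSystem ha) (mem_e8Lattice_of_mem_E8RootSystem hb))
    (by
      rw [inner_sub_left, inner_sub_right, inner_sub_right, real_inner_comm a b, hab,
        inner_self_of_mem_E8RootSystem ha, inner_self_of_mem_E8RootSystem hb]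
      norm_num)

lemma exists_inner_eq_one_of_mem_E8RootSystem {a : ℝ⁸} (ha : a ∈ E8RootSystem) :
    ∃ c ∈ E8RootSystem, ⟪c, a⟫ = 1 := by
  rcases ha with ⟨i, j, hij, s, t, hs, ht, rfl⟩ | ⟨ha, -⟩
  · obtain ⟨p, -, -, hpi, hpj, -, -⟩ := exists_ne_ne_of_four_le_card i j (by simp)
    refine ⟨_, .inl (smul_single_add_smul_single_mem_DRootSystem hpi.symm hs (.inl rfl)), ?_⟩
    rw [inner_smul_single_add_smul_single_left, smul_single_add_smul_single_apply,
      smul_single_add_smul_single_apply]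
    rcases hs with rfl | rfl <;> simp [hij.ne, hpi, hpj]
  · have hsign (k : Fin 8) : 2 * a k = 1 ∨ 2 * a k = -1 := by
      rcases ha k with h | h <;> simp [h]
    refine ⟨_, .inl (smul_single_add_smul_single_mem_DRootSystem (by decide : (0 : Fin 8) ≠ 1)
      (hsign 0) (hsign 1)), ?_⟩
    rw [inner_smul_single_add_smul_single_left]
    rcases ha 0 with h₀ | h₀ <;> rcases ha 1 with h₁ | h₁ <;> rw [h₀, h₁] <;> norm_num

lemma hasAdjacentCommonNeighbors_of_coords {a b : ℝ⁸} {p q r : Fin 8} (hpq : p ≠ q) (hpr : p ≠ r)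
    (hqr : q ≠ r) {σ τ ρ : ℝ} (hσ : σ = 1 ∨ σ = -1) (hτ : τ = 1 ∨ τ = -1) (hρ : ρ = 1 ∨ ρ = -1)
    (ha₁ : σ * a p + τ * a q = 1) (hb₁ : σ * b p + τ * b q = 1)
    (ha₂ : σ * a p + ρ * a r = 1) (hb₂ : σ * b p + ρ * b r = 1) :
    HasAdjacentCommonNeighbors E8RootSystem a b := by
  refine ⟨_, .inl (smul_single_add_smul_single_mem_DRootSystem hpq hσ hτ),
    _, .inl (smul_single_add_smul_single_mem_DRootSystem hpr hσ hρ), ?_, ?_, ?_, ?_, ?_⟩ <;>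
    rw [inner_smul_single_add_smul_single_left]
  all_goals try assumption
  simp [hpr, hqr, hpq.symm, mul_self_eq_one_iff.mpr hσ]

lemma hasAdjacentCommonNeighbors_of_mem_DRootSystem {a b : ℝ⁸} (ha : a ∈ DRootSystem 8)
    (hb : b ∈ DRootSystem 8) (hab : ⟪a, b⟫ = 0) : HasAdjacentCommonNeighbors E8RootSystem a b := by
  obtain ⟨i, j, hij, s₁, s₂, hs₁, hs₂, rfl⟩ := ha
  obtain ⟨k, l, hkl, s₃, s₄, hs₃, hs₄, rfl⟩ := hb
  rw [inner_smul_single_add_smul_single_left] at hab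
  simp only [smul_single_add_smul_single_apply] at hab
  by_cases hik : i = k
  · subst hik
    by_cases hjl : j = l
    · subst hjl
      simp only [if_pos, hij.ne, hij.ne', if_false, add_zero, zero_add] at hab
      obtain ⟨q, r, hqr, hqi, hqj, hri, hrj⟩ := exists_ne_ne_of_four_le_card i j (by simp)
      by_cases h : s₃ = s₁
      · subst h
        refine hasAdjacentCommonNeighbors_of_coords (p := i) hqi.symm hri.symm hqr hs₃
          (.inl rfl) (.inl rfl) ?_ ?_ ?_ ?_ <;>
          simp [hij.ne, hqi, hqj, hri, hrj, mul_self_eq_one_iff.mpr hs₃]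
      · have h' : s₄ = s₂ := by grind
        subst h'
        refine hasAdjacentCommonNeighbors_of_coords (p := j) hqj.symm hrj.symm hqr hs₄
          (.inl rfl) (.inl rfl) ?_ ?_ ?_ ?_ <;>
          simp [hij.ne', hqi, hqj, hri, hrj, mul_self_eq_one_iff.mpr hs₄]
    · grind
  · by_cases hil : i = l
    · subst hil
      grind
    by_cases hjk : j = k
    · subst hjk
      grind
    by_cases hjl : j = l
    · subst hjl
      grind
    refine hasAdjacentCommonNeighbors_of_coords (p := i) (q := k) (r := l) hik hil hkl.ne
      hs₁ hs₃ hs₄ ?_ ?_ ?_ ?_ <;>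
      simp [hij.ne, hik, hil, hkl.ne, hkl.ne', Ne.symm hik, Ne.symm hil, Ne.symm hjk,
        Ne.symm hjl, mul_self_eq_one_iff.mpr hs₁, mul_self_eq_one_iff.mpr hs₃,
        mul_self_eq_one_iff.mpr hs₄]

lemma hasAdjacentCommonNeighbors_of_mem_DRootSystem_of_half {a b : ℝ⁸} (ha : a ∈ DRootSystem 8)
    (hb : ∀ m, b m = 1 / 2 ∨ b m = -(1 / 2)) (hab : ⟪a, b⟫ = 0) :
    HasAdjacentCommonNeighbors E8RootSystem a b := by
  obtain ⟨i, j, hij, s₁, s₂, hs₁, hs₂, rfl⟩ := ha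
  rw [inner_smul_single_add_smul_single_left] at hab
  obtain ⟨q, r, hqr, hqi, hqj, hri, hrj⟩ := exists_ne_ne_of_four_le_card i j (by simp)
  have hsign (m : Fin 8) : 2 * b m = 1 ∨ 2 * b m = -1 := by rcases hb m with h | h <;> simp [h]
  have hsq (m : Fin 8) : 2 * b m * b m = 1 / 2 := by rcases hb m with h | h <;> rw [h] <;> norm_num
  by_cases h : s₁ * b i = 1 / 2
  · refine hasAdjacentCommonNeighbors_of_coords (p := i) hqi.symm hri.symm hqr hs₁
      (hsign q) (hsign r) ?_ (by linarith [hsq q]) ?_ (by linarith [hsq r]) <;>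
      simp [hij.ne, hqi, hqj, hri, hrj, mul_self_eq_one_iff.mpr hs₁]
  · have h' : s₂ * b j = 1 / 2 := by grind
    refine hasAdjacentCommonNeighbors_of_coords (p := j) hqj.symm hrj.symm hqr hs₂
      (hsign q) (hsign r) ?_ (by linarith [hsq q]) ?_ (by linarith [hsq r]) <;>
      simp [hij.ne', hqi, hqj, hri, hrj, mul_self_eq_one_iff.mpr hs₂]

lemma hasAdjacentCommonNeighbors_of_half_of_half {a b : ℝ⁸} (ha : ∀ m, a m = 1 / 2 ∨ a m = -(1 / 2))
    (hb : ∀ m, b m = 1 / 2 ∨ b m = -(1 / 2)) (hab : ⟪a, b⟫ = 0) :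
    HasAdjacentCommonNeighbors E8RootSystem a b := by
  classical
  set D := Finset.univ.filter fun m => a m = b m
  have hD : D.card = 4 := by
    have hterm (m : Fin 8) : a m * b m = (if a m = b m then 1 / 2 else 0) - 1 / 4 := by
      rcases ha m with h | h <;> rcases hb m with h' | h' <;> rw [h, h'] <;> norm_num
    rw [EuclideanSpace.real_inner_eq_sum, Finset.sum_congr rfl fun m _ => hterm m,
      Finset.sum_sub_distrib, ← Finset.sum_filter] at hab
    simp only [Finset.sum_const, Finset.card_univ, Fintype.card_fin, nsmul_eq_mul] at hab
    have : (D.card : ℝ) = 4 := by linarith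
    exact_mod_cast this
  obtain ⟨p, hp, q, hq, r, hr, hpq, hpr, hqr⟩ := Finset.two_lt_card.mp (by omega : 2 < D.card)
  simp only [D, Finset.mem_filter, Finset.mem_univ, true_and] at hp hq hr
  have hsign (m : Fin 8) : 2 * a m = 1 ∨ 2 * a m = -1 := by rcases ha m with h | h <;> simp [h]
  have hsq (m : Fin 8) : 2 * a m * a m = 1 / 2 := by rcases ha m with h | h <;> rw [h] <;> norm_num
  refine hasAdjacentCommonNeighbors_of_coords hpq hpr hqr (hsign p) (hsign q) (hsign r) ?_ ?_ ?_ ?_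
  all_goals simp only [← hp, ← hq, ← hr]; linarith [hsq p, hsq q, hsq r]

lemma hasAdjacentCommonNeighbors_of_mem_E8RootSystem {a b : ℝ⁸} (ha : a ∈ E8RootSystem)
    (hb : b ∈ E8RootSystem) (hab : ⟪a, b⟫ = 0) : HasAdjacentCommonNeighbors E8RootSystem a b := by
  rcases ha with ha | ⟨ha, -⟩ <;> rcases hb with hb | ⟨hb, -⟩
  · exact hasAdjacentCommonNeighbors_of_mem_DRootSystem ha hb hab
  · exact hasAdjacentCommonNeighbors_of_mem_DRootSystem_of_half ha hb hab
  · exact (hasAdjacentCommonNeighbors_of_mem_DRootSystem_of_half hb ha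
      (by rwa [real_inner_comm])).symm
  · exact hasAdjacentCommonNeighbors_of_half_of_half ha hb hab

lemma span_E8RootSystem : Submodule.span ℝ E8RootSystem = ⊤ := by
  rw [eq_top_iff, ← (EuclideanSpace.basisFun (Fin 8) ℝ).toBasis.span_eq, Submodule.span_le]
  rintro _ ⟨k, rfl⟩
  obtain ⟨j, hj⟩ := exists_ne k
  have hadd := smul_single_add_smul_single_mem_DRootSystem hj.symm (.inl rfl) (.inl rfl)
  have hsub := smul_single_add_smul_single_mem_DRootSystem hj.symm (.inl rfl) (.inr rfl)
  have : (EuclideanSpace.basisFun (Fin 8) ℝ).toBasis k = (1 / 2 : ℝ) •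
      (((1 : ℝ) • EuclideanSpace.single k 1 + (1 : ℝ) • EuclideanSpace.single j 1) +
        ((1 : ℝ) • EuclideanSpace.single k 1 + (-1 : ℝ) • EuclideanSpace.single j 1)) := by
    simp only [OrthonormalBasis.coe_toBasis, EuclideanSpace.basisFun_apply]
    module
  rw [SetLike.mem_coe, this]
  exact Submodule.smul_mem _ _ (add_mem (Submodule.subset_span (.inl hadd))
    (Submodule.subset_span (.inl hsub)))

theorem statement5 :
    ∀ y : EuclideanSpace ℝ (Fin 8) → EuclideanSpace ℝ (Fin 8),
      (∀ x ∈ E8RootSystem, ⟪x, y x⟫ = 0) →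
      (∀ x ∈ E8RootSystem, ∀ x' ∈ E8RootSystem, x ≠ x' → ⟪x, x'⟫ = 1 →
        ⟪x, y x'⟫ + ⟪x', y x⟫ ≤ 0) →
      ∃ Φ : EuclideanSpace ℝ (Fin 8) →ₗ[ℝ] EuclideanSpace ℝ (Fin 8),
        (∀ u v, ⟪Φ u, v⟫ = -⟪u, Φ v⟫) ∧ ∀ x ∈ E8RootSystem, y x = Φ x := by
  intro y hy₀ hy₁
  have hy : IsInfinitesimalMotion E8RootSystem y := ⟨hy₀, hy₁⟩
  exact exists_skew_eq_of_innerVariation_eq_zero span_E8RootSystem fun a ha b hb =>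
    hy.innerVariation_eq_zero isSimplyLacedRootSet_E8RootSystem
      (fun _ => exists_inner_eq_one_of_mem_E8RootSystem)
      (fun _ ha _ hb => hasAdjacentCommonNeighbors_of_mem_E8RootSystem ha hb) ha hb
end

section
/- Let C be a finite set of vectors in ℝ^m with |x|² = 4 for all x ∈ C and ⟨x, x'⟩ ≤ 2 for all distinct x, x' ∈ C. Let S_1, …, S_N be pairwise disjoint subsets of C such that within each S_i all distinct pairs satisfy ⟨x, x'⟩ ≤ 1. Let T_1, …, T_N be pairwise disjoint finite sets of unit vectors in ℝ^d such that ⟨y, y'⟩ ≤ 1/2 for all distinct y, y' in T_1 ∪ ⋯ ∪ T_N, and ⟨y, y'⟩ ≤ −1/2 for all distinct y, y' lying in the same T_i. Define K ⊂ ℝ^m × ℝ^d = ℝ^{m+d} by K = {(x, 0) : x ∈ C ∖ (S_1 ∪ ⋯ ∪ S_N)} ∪ ⋃_{i=1}^N {(√(2/3)·x, √(4/3)·y) : x ∈ S_i, y ∈ T_i}. Then every element of K has squared norm 4, ⟨u, v⟩ ≤ 2 for all distinct u, v ∈ K, and K has exactly |C| + Σ_{i=1}^N (|T_i| − 1)·|S_i|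 elements. -/
/-!
Lifting `x ∈ Sᵢ` to `(√(2/3) x, √(4/3) y)` for each `y ∈ Tᵢ` keeps the squared norm
`(2/3)·4 + (4/3)·1 = 4`, and the inner product of two lifted points is
`(2/3)⟪x, x'⟫ + (4/3)⟪y, y'⟫`. This is at most `2` in each of the three possible cases:
`x = x'` (so `y, y'` lie in the same `Tᵢ`: `8/3 - 2/3`), `y = y'` (so `x, x'` lie in the same `Sᵢ`:
`2/3 + 4/3`), and both distinct (`4/3 + 2/3`). A point `(x, 0)` left in place meets a lifted point
in `√(2/3)⟪x, x'⟫ ≤ 2`. The second coordinates separate all the pieces, so the count is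
`|C| - Σ |Sᵢ| + Σ |Sᵢ| |Tᵢ|`.
-/

open scoped RealInnerProductSpace Function

lemma ncard_iUnion_eq_sum {ι α : Type*} [Fintype ι] {s : ι → Set α} (hs : ∀ i, (s i).Finite)
    (h : Pairwise (Disjoint on s)) : (⋃ i, s i).ncard = ∑ i, (s i).ncard := by
  rw [Set.ncard_iUnion_of_finite hs h, finsum_eq_sum_of_fintype]

lemma ncard_iUnion_prod {ι α β : Type*} [Fintype ι] {S : ι → Set α} {T : ι → Set β}
    (hSfin : ∀ i, (S i).Finite) (hTfin : ∀ i, (T i).Finite) (hTdisj : Pairwise (Disjoint on T)) :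
    (⋃ i, S i ×ˢ T i).ncard = ∑ i, (S i).ncard * (T i).ncard := by
  rw [ncard_iUnion_eq_sum (fun i => (hSfin i).prod (hTfin i))
    fun i j hij => Set.disjoint_prod.mpr (Or.inr (hTdisj hij))]
  simp only [Set.ncard_prod]

variable {E F : Type*} [NormedAddCommGroup E] [InnerProductSpace ℝ E]
  [NormedAddCommGroup F] [InnerProductSpace ℝ F]

noncomputable def liftPair (p : E × F) : E × F :=
  (Real.sqrt (2 / 3) • p.1, Real.sqrt (4 / 3) • p.2)

lemma liftPair_injective : Function.Injective (liftPair : E × F → E × F) := by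
  rintro ⟨x, y⟩ ⟨x', y'⟩ h
  simp only [liftPair, Prod.mk.injEq] at h
  exact Prod.ext (smul_right_injective E (by positivity) h.1)
    (smul_right_injective F (by positivity) h.2)

lemma inner_liftPair (p q : E × F) :
    ⟪(liftPair p).1, (liftPair q).1⟫ + ⟪(liftPair p).2, (liftPair q).2⟫ =
      2 / 3 * ⟪p.1, q.1⟫ + 4 / 3 * ⟪p.2, q.2⟫ := by
  simp only [liftPair, real_inner_smul_left, real_inner_smul_right, ← mul_assoc,
    Real.mul_self_sqrt (by norm_num : (0 : ℝ) ≤ 2 / 3),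
    Real.mul_self_sqrt (by norm_num : (0 : ℝ) ≤ 4 / 3)]

lemma norm_liftPair_sq (p : E × F) :
    ‖(liftPair p).1‖ ^ 2 + ‖(liftPair p).2‖ ^ 2 = 2 / 3 * ‖p.1‖ ^ 2 + 4 / 3 * ‖p.2‖ ^ 2 := by
  simpa only [real_inner_self_eq_norm_sq] using inner_liftPair p p

lemma inner_liftPair_le_two {p q : E × F} (hpq : p ≠ q) (hp₁ : ‖p.1‖ ^ 2 = 4) (hp₂ : ‖p.2‖ = 1)
    (h₁ : p.1 ≠ q.1 → ⟪p.1, q.1⟫ ≤ 2) (h₂ : p.2 ≠ q.2 → ⟪p.2, q.2⟫ ≤ 1 / 2)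
    (h₁_eq : p.1 = q.1 → ⟪p.2, q.2⟫ ≤ -(1 / 2)) (h₂_eq : p.2 = q.2 → ⟪p.1, q.1⟫ ≤ 1) :
    ⟪(liftPair p).1, (liftPair q).1⟫ + ⟪(liftPair p).2, (liftPair q).2⟫ ≤ 2 := by
  rw [inner_liftPair]
  by_cases hx : p.1 = q.1
  · have hy : p.2 ≠ q.2 := fun hy => hpq (Prod.ext hx hy)
    have hxx : ⟪p.1, q.1⟫ = 4 := by rw [← hx, real_inner_self_eq_norm_sq, hp₁]
    linarith [h₁_eq hx]
  by_cases hy : p.2 = q.2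
  · have hyy : ⟪p.2, q.2⟫ = 1 := by rw [← hy, real_inner_self_eq_norm_sq, hp₂, one_pow]
    linarith [h₂_eq hy]
  · linarith [h₁ hx, h₂ hy]

lemma inner_liftPair_le_two_of_mem_iUnion_prod {ι : Type*} {S : ι → Set E} {T : ι → Set F}
    (hSnorm : ∀ i, ∀ x ∈ S i, ‖x‖ ^ 2 = 4)
    (hSip : ∀ i j, ∀ x ∈ S i, ∀ x' ∈ S j, x ≠ x' → ⟪x, x'⟫ ≤ 2)
    (hSdisj : Pairwise (Disjoint on S))
    (hSin : ∀ i, ∀ x ∈ S i, ∀ x' ∈ S i, x ≠ x' → ⟪x, x'⟫ ≤ 1)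
    (hTdisj : Pairwise (Disjoint on T))
    (hTunit : ∀ i, ∀ y ∈ T i, ‖y‖ = 1)
    (hTip : ∀ i j, ∀ y ∈ T i, ∀ y' ∈ T j, y ≠ y' → ⟪y, y'⟫ ≤ 1 / 2)
    (hTin : ∀ i, ∀ y ∈ T i, ∀ y' ∈ T i, y ≠ y' → ⟪y, y'⟫ ≤ -(1 / 2))
    {p q : E × F} (hp : p ∈ ⋃ i, S i ×ˢ T i) (hq : q ∈ ⋃ i, S i ×ˢ T i) (hpq : p ≠ q) :
    ⟪(liftPair p).1, (liftPair q).1⟫ + ⟪(liftPair p).2, (liftPair q).2⟫ ≤ 2 := by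
  obtain ⟨i, hx, hy⟩ := Set.mem_iUnion.mp hp
  obtain ⟨j, hx', hy'⟩ := Set.mem_iUnion.mp hq
  refine inner_liftPair_le_two hpq (hSnorm i _ hx) (hTunit i _ hy) (hSip i j _ hx _ hx')
    (hTip i j _ hy _ hy') (fun h => ?_) (fun h => ?_)
  · obtain rfl : i = j := by_contra fun hij => (hSdisj hij).ne_of_mem hx hx' h
    exact hTin i _ hy _ hy' fun hy => hpq (Prod.ext h hy)
  · obtain rfl : i = j := by_contra fun hij => (hTdisj hij).ne_of_mem hy hy' h
    exact hSin i _ hx _ hx' fun hx => hpq (Prod.ext hx h)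

lemma inner_flat_liftPair_le_two {ι : Type*} {C : Set E} {S : ι → Set E} {T : ι → Set F}
    (hCip : ∀ x ∈ C, ∀ x' ∈ C, x ≠ x' → ⟪x, x'⟫ ≤ 2) (hSC : ∀ i, S i ⊆ C)
    {x : E} (hx : x ∈ C \ ⋃ i, S i) {q : E × F} (hq : q ∈ ⋃ i, S i ×ˢ T i) :
    ⟪x, (liftPair q).1⟫ + ⟪(0 : F), (liftPair q).2⟫ ≤ 2 := by
  obtain ⟨i, hq₁, -⟩ := Set.mem_iUnion.mp hq
  have hxq : ⟪x, q.1⟫ ≤ 2 :=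
    hCip x hx.1 q.1 (hSC i hq₁) fun h => hx.2 (Set.mem_iUnion.mpr ⟨i, h ▸ hq₁⟩)
  have hc : Real.sqrt (2 / 3) ≤ 1 := Real.sqrt_le_one.mpr (by norm_num)
  have hc₀ : 0 ≤ Real.sqrt (2 / 3) := Real.sqrt_nonneg _
  simp only [liftPair, real_inner_smul_right, inner_zero_left, add_zero]
  nlinarith

lemma ncard_flat_union_liftPair {ι : Type*} [Fintype ι] {C : Set E} {S : ι → Set E}
    {T : ι → Set F} (hCfin : C.Finite) (hSC : ∀ i, S i ⊆ C) (hSdisj : Pairwise (Disjoint on S))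
    (hTfin : ∀ i, (T i).Finite) (hTdisj : Pairwise (Disjoint on T)) (hT : ∀ i, (0 : F) ∉ T i) :
    (((fun x => (x, (0 : F))) '' (C \ ⋃ i, S i) ∪ liftPair '' ⋃ i, S i ×ˢ T i).ncard : ℤ) =
      C.ncard + ∑ i, (((T i).ncard : ℤ) - 1) * (S i).ncard := by
  have hSfin : ∀ i, (S i).Finite := fun i => hCfin.subset (hSC i)
  have hdisj : Disjoint ((fun x => (x, (0 : F))) '' (C \ ⋃ i, S i))
      (liftPair '' ⋃ i, S i ×ˢ T i) := by
    rw [Set.disjoint_left]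
    rintro _ ⟨x, -, rfl⟩ ⟨q, hq, hq0⟩
    obtain ⟨i, -, hy⟩ := Set.mem_iUnion.mp hq
    have hq₂ : q.2 = 0 := by simpa [liftPair] using congrArg Prod.snd hq0
    exact hT i (hq₂ ▸ hy)
  have hsum : ∑ i, (((T i).ncard : ℤ) - 1) * (S i).ncard =
      ∑ i, (((S i).ncard * (T i).ncard : ℕ) : ℤ) - ∑ i, ((S i).ncard : ℤ) := by
    rw [← Finset.sum_sub_distrib]
    exact Finset.sum_congr rfl fun i _ => by push_cast; ring
  rw [Set.ncard_union_eq hdisj (hCfin.sdiff.image _)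
      ((Set.finite_iUnion fun i => (hSfin i).prod (hTfin i)).image _),
    Set.ncard_image_of_injective _ (Prod.mk_left_injective 0),
    Set.ncard_image_of_injective _ liftPair_injective, ncard_iUnion_prod hSfin hTfin hTdisj,
    Nat.cast_add, Set.cast_ncard_sdiff (Set.iUnion_subset hSC) hCfin,
    ncard_iUnion_eq_sum hSfin hSdisj, hsum]
  push_cast
  ring

theorem statement17 {m d : ℕ} (C : Set (EuclideanSpace ℝ (Fin m))) (hCfin : C.Finite)
    (hCnorm : ∀ x ∈ C, ‖x‖ ^ 2 = 4)
    (hCip : ∀ x ∈ C, ∀ x' ∈ C, x ≠ x' → ⟪x, x'⟫ ≤ 2)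
    (N : ℕ) (S : Fin N → Set (EuclideanSpace ℝ (Fin m)))
    (hSC : ∀ i, S i ⊆ C)
    (hSdisj : ∀ i j, i ≠ j → Disjoint (S i) (S j))
    (hSip : ∀ i, ∀ x ∈ S i, ∀ x' ∈ S i, x ≠ x' → ⟪x, x'⟫ ≤ 1)
    (T : Fin N → Set (EuclideanSpace ℝ (Fin d)))
    (hTfin : ∀ i, (T i).Finite)
    (hTdisj : ∀ i j, i ≠ j → Disjoint (T i) (T j))
    (hTunit : ∀ i, ∀ y ∈ T i, ‖y‖ = 1)
    (hTip : ∀ i j, ∀ y ∈ T i, ∀ y' ∈ T j, y ≠ y' → ⟪y, y'⟫ ≤ 1 / 2)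
    (hTin : ∀ i, ∀ y ∈ T i, ∀ y' ∈ T i, y ≠ y' → ⟪y, y'⟫ ≤ -(1 / 2)) :
    let K : Set (EuclideanSpace ℝ (Fin m) × EuclideanSpace ℝ (Fin d)) :=
      {p | ∃ x ∈ C \ (⋃ i, S i), p = (x, 0)} ∪
      ⋃ i, {p | ∃ x ∈ S i, ∃ y ∈ T i,
        p = (Real.sqrt (2 / 3) • x, Real.sqrt (4 / 3) • y)}
    (∀ u ∈ K, ‖u.1‖ ^ 2 + ‖u.2‖ ^ 2 = 4) ∧
    (∀ u ∈ K, ∀ v ∈ K, u ≠ v → ⟪u.1, v.1⟫ + ⟪u.2, v.2⟫ ≤ 2) ∧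
    (K.ncard : ℤ) = (C.ncard : ℤ) + ∑ i, (((T i).ncard : ℤ) - 1) * ((S i).ncard : ℤ) := by
  intro K
  have hK : K = (fun x => (x, 0)) '' (C \ ⋃ i, S i) ∪ liftPair '' ⋃ i, S i ×ˢ T i := by
    ext p
    simp only [K, Set.mem_union, Set.mem_ofPred_eq, Set.mem_image, Set.mem_iUnion, Set.mem_prod,
      Prod.exists, liftPair, eq_comm]
    grind
  refine ⟨?_, ?_, ?_⟩
  · rw [hK]
    rintro _ (⟨x, ⟨hx, -⟩, rfl⟩ | ⟨p, hp, rfl⟩)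
    · simp [hCnorm x hx]
    · obtain ⟨i, hx, hy⟩ := Set.mem_iUnion.mp hp
      rw [norm_liftPair_sq, hCnorm _ (hSC i hx), hTunit i _ hy]
      norm_num
  · rw [hK]
    rintro _ (⟨x, hx, rfl⟩ | ⟨p, hp, rfl⟩) _ (⟨x', hx', rfl⟩ | ⟨q, hq, rfl⟩) huv
    · simpa using hCip x hx.1 x' hx'.1 fun h => huv (by rw [h])
    · exact inner_flat_liftPair_le_two hCip hSC hx hq
    · rw [real_inner_comm, real_inner_comm (0 : EuclideanSpace ℝ (Fin d))]
      exact inner_flat_liftPair_le_two hCip hSC hx' hp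
    · exact inner_liftPair_le_two_of_mem_iUnion_prod (fun i x hx => hCnorm x (hSC i hx))
        (fun i j x hx x' hx' => hCip x (hSC i hx) x' (hSC j hx')) hSdisj hSip hTdisj hTunit
        hTip hTin hp hq fun h => huv (congrArg liftPair h)
  · rw [hK]
    exact ncard_flat_union_liftPair hCfin hSC hSdisj hTfin hTdisj
      fun i h => by simpa using hTunit i 0 h
end
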